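/- arXiv:math/0310033 — 8 statements merged into one kernel-verified Lean document; each statement's English description precedes it below -/
import Mathlib

section
/- Let n ≥ max(2m,3) with m ≥ 1. The set S of all n×n complex matrices of the block form with first row (μ, −μ x̄ᵀH′A, c), middle block rows (0, A, x), and last row (0, 0, 1/μ̄) — where μ, c ∈ ℂ with μ ≠ 0, x ∈ ℂ^{n−2}, A is an (n−2)×(n−2) complex matrix with Aᵀ H′ Ā = H′, and 2 Re(c/μ) + xᵀ H′ x̄ = 0 — is a subgroup of GLₙ(ℂ), and every U ∈ S satisfies Uᵀ H Ū = H (i.e., S ⊆ U(H)). -/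
/- The standard Hermitian matrix of signature (n-m, m) in the anti-diagonal
block form (formformaminus) of the paper; for the parameters (n-2, m-1) it is
the central block H′ of Hmat n m. -/
def Hmat (n m : ℕ) : Matrix (Fin n) (Fin n) ℂ := fun i j =>
  if i.1 + j.1 + 1 = n ∧ (i.1 < m ∨ n ≤ i.1 + m) then 1
  else if i = j ∧ m ≤ i.1 ∧ i.1 + m < n then 1 else 0

/-- The matrix of block form (formalgebra): first row (μ, −μ x̄ᵀH′A, c),
middle rows (0, A, x), last row (0, 0, 1/μ̄). -/
noncomputable def mkS (n m : ℕ) (μ c : ℂ) (x : Fin (n - 2) → ℂ)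
    (A : Matrix (Fin (n - 2)) (Fin (n - 2)) ℂ) : Matrix (Fin n) (Fin n) ℂ :=
  fun i j =>
    if hi0 : i.1 = 0 then
      if hj0 : j.1 = 0 then μ
      else if hjn : j.1 = n - 1 then c
      else -μ * ∑ k, ∑ l, (starRingEnd ℂ) (x k) * Hmat (n - 2) (m - 1) k l *
        A l ⟨j.1 - 1, by have := j.isLt; omega⟩
    else if hin : i.1 = n - 1 then
      (if j.1 = n - 1 then 1 / (starRingEnd ℂ) μ else 0)
    else
      if hj0 : j.1 = 0 then 0
      else if hjn : j.1 = n - 1 then x ⟨i.1 - 1, by have := i.isLt; omega⟩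
      else A ⟨i.1 - 1, by have := i.isLt; omega⟩ ⟨j.1 - 1, by have := j.isLt; omega⟩

/-- Membership in the set S of the paper's Lemma: U has the block form
(formalgebra) with μ ≠ 0, A ∈ U(H′) and 2Re(c/μ) + xᵀH′x̄ = 0. -/
def inS (n m : ℕ) (U : Matrix (Fin n) (Fin n) ℂ) : Prop :=
  ∃ (μ c : ℂ) (x : Fin (n - 2) → ℂ) (A : Matrix (Fin (n - 2)) (Fin (n - 2)) ℂ),
    μ ≠ 0 ∧
    A.transpose * Hmat (n - 2) (m - 1) * A.map (starRingEnd ℂ) = Hmat (n - 2) (m - 1) ∧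
    2 * (c / μ).re + (dotProduct x ((Hmat (n - 2) (m - 1)).mulVec (star x))).re = 0 ∧
    U = mkS n m μ c x A


/-!
`S` is the stabiliser in `U(H)` of the isotropic line `ℂ e₁`. Split the indices as
`n = 1 + (n - 2) + 1`; then `H` is `[[0, 0, 1], [0, H′, 0], [1, 0, 0]]` and
`⟨u, v⟩ = u₁ v̄ₙ + uₙ v̄₁ + ⟨u′, v′⟩′`. Evaluating `Uᵀ H Ū = H` entrywise on the columns of a
matrix whose first column is `μ e₁`, `μ ≠ 0`, forces its last row to be `(0, 0, 1/μ̄)`, its middle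
block `A` to lie in `U(H′)`, its first row to be `(μ, −μ x̄ᵀH′A, c)` and `2 Re(c/μ) + xᵀH′x̄ = 0`;
conversely these conditions give `Uᵀ H Ū = H`. As `H² = 1`, `U(H)` is a group, and so is the
stabiliser of a line; hence so is `S`.
-/

open Matrix

def PreservesForm {ι R : Type*} [Fintype ι] [CommRing R] (σ : R →+* R) (H U : Matrix ι ι R) :
    Prop :=
  Uᵀ * H * U.map σ = H

namespace PreservesForm

variable {ι R : Type*} [Fintype ι] [CommRing R] {σ : R →+* R} {H U V : Matrix ι ι R}

theorem one [DecidableEq ι] : PreservesForm σ H 1 := by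
  simp [PreservesForm, Matrix.map_one]

theorem mul (hU : PreservesForm σ H U) (hV : PreservesForm σ H V) :
    PreservesForm σ H (U * V) :=
  calc (U * V)ᵀ * H * (U * V).map σ = Vᵀ * (Uᵀ * H * U.map σ) * V.map σ := by
        simp only [transpose_mul, Matrix.map_mul, Matrix.mul_assoc]
    _ = H := by rw [hU, hV]

theorem isUnit [DecidableEq ι] (hH : IsUnit H) (hU : PreservesForm σ H U) : IsUnit U := by
  rw [isUnit_iff_isUnit_det] at hH ⊢
  have hdet : U.det * (H.det * σ U.det) = H.det := by
    have h := congrArg det hU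
    rw [det_mul, det_mul, det_transpose, ← RingHom.mapMatrix_apply, ← σ.map_det] at h
    linear_combination h
  exact isUnit_of_mul_isUnit_left (hdet ▸ hH)

theorem inv [DecidableEq ι] (hH : IsUnit H) (hU : PreservesForm σ H U) :
    PreservesForm σ H U⁻¹ := by
  have hUU : U * U⁻¹ = 1 := mul_nonsing_inv U ((isUnit_iff_isUnit_det U).mp (hU.isUnit hH))
  calc U⁻¹ᵀ * H * U⁻¹.map σ = U⁻¹ᵀ * (Uᵀ * H * U.map σ) * U⁻¹.map σ := by rw [hU]
    _ = (U * U⁻¹)ᵀ * H * (U * U⁻¹).map σ := by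
        simp only [transpose_mul, Matrix.map_mul, Matrix.mul_assoc]
    _ = H := by simp [hUU, Matrix.map_one]

end PreservesForm

/-- `U` maps the line spanned by the basis vector `e j` onto itself. -/
def StabilizesBasisLine {ι R : Type*} [CommRing R] (U : Matrix ι ι R) (j : ι) : Prop :=
  (∀ i, i ≠ j → U i j = 0) ∧ U j j ≠ 0

namespace StabilizesBasisLine

variable {ι R : Type*} [CommRing R] {U V : Matrix ι ι R} {j : ι}

theorem one [DecidableEq ι] [Nontrivial R] : StabilizesBasisLine (1 : Matrix ι ι R) j :=
  ⟨fun _ hi => one_apply_ne hi, by simp⟩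

variable [Fintype ι]

theorem mul_apply (hV : StabilizesBasisLine V j) (i : ι) : (U * V) i j = U i j * V j j :=
  Finset.sum_eq_single j (fun k _ hk => by simp [hV.1 k hk]) (by simp)

theorem mul [IsDomain R] (hU : StabilizesBasisLine U j) (hV : StabilizesBasisLine V j) :
    StabilizesBasisLine (U * V) j :=
  ⟨fun i hi => by rw [hV.mul_apply, hU.1 i hi, zero_mul], by
    rw [hV.mul_apply]; exact mul_ne_zero hU.2 hV.2⟩

theorem inv [DecidableEq ι] [IsDomain R] (hU : StabilizesBasisLine U j) (hunit : IsUnit U) :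
    StabilizesBasisLine U⁻¹ j := by
  have key (i : ι) : U⁻¹ i j * U j j = (1 : Matrix ι ι R) i j := by
    rw [← hU.mul_apply, nonsing_inv_mul U ((isUnit_iff_isUnit_det U).mp hunit)]
  refine ⟨fun i hi => ?_, fun h => ?_⟩
  · simpa [hU.2, one_apply_ne hi] using key i
  · simpa [h] using key j

end StabilizesBasisLine

theorem Complex.mul_inv_add_conj_inv_mul_conj (c μ : ℂ) :
    c * μ⁻¹ + (starRingEnd ℂ μ)⁻¹ * starRingEnd ℂ c = ((2 * (c / μ).re : ℝ) : ℂ) := by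
  rw [← Complex.add_conj]
  simp [div_eq_mul_inv, mul_comm]

def hmatPerm (n m : ℕ) (i : Fin n) : Fin n :=
  if (i : ℕ) < m ∨ n ≤ i + m then i.rev else i

theorem hmatPerm_val (n m : ℕ) (i : Fin n) :
    (hmatPerm n m i : ℕ) = if (i : ℕ) < m ∨ n ≤ i + m then n - 1 - i else i := by
  unfold hmatPerm
  split_ifs <;> simp only [Fin.val_rev]; omega

theorem hmatPerm_involutive (n m : ℕ) : Function.Involutive (hmatPerm n m) := by
  intro i
  have := i.2
  simp only [Fin.ext_iff, hmatPerm_val]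
  split_ifs <;> omega

theorem Hmat_apply (n m : ℕ) (i j : Fin n) :
    Hmat n m i j = if j = hmatPerm n m i then 1 else 0 := by
  have := i.2
  simp only [Hmat, Fin.ext_iff, hmatPerm_val]
  split_ifs <;> first | rfl | omega

theorem Hmat_transpose (n m : ℕ) : (Hmat n m)ᵀ = Hmat n m := by
  ext i j
  have := i.2
  have := j.2
  simp only [transpose_apply, Hmat, Fin.ext_iff]
  split_ifs <;> first | rfl | omega

theorem Hmat_mulVec_apply (n m : ℕ) (v : Fin n → ℂ) (i : Fin n) :
    (Hmat n m *ᵥ v) i = v (hmatPerm n m i) := by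
  simp [mulVec, dotProduct, Hmat_apply]

theorem Hmat_mul_self (n m : ℕ) : Hmat n m * Hmat n m = 1 := by
  ext i j
  rw [mul_apply, Finset.sum_eq_single (hmatPerm n m i)
    (fun k _ hk => by simp [Hmat_apply n m i, hk]) (by simp), Hmat_apply n m i, if_pos rfl,
    one_mul, Hmat_apply, hmatPerm_involutive, one_apply]
  simp only [eq_comm]

theorem dotProduct_Hmat_mulVec_comm (n m : ℕ) (u v : Fin n → ℂ) :
    u ⬝ᵥ Hmat n m *ᵥ v = v ⬝ᵥ Hmat n m *ᵥ u := by
  rw [dotProduct_mulVec, dotProduct_comm, ← mulVec_transpose, Hmat_transpose]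

theorem star_dotProduct_Hmat_mulVec (n m : ℕ) (u v : Fin n → ℂ) :
    star (u ⬝ᵥ Hmat n m *ᵥ v) = star u ⬝ᵥ Hmat n m *ᵥ star v := by
  simp [dotProduct, Hmat_mulVec_apply]

section Blocks

variable {n m : ℕ}

/-- The middle indices `1, …, n - 2` of `Fin n`, on which `H′` and the block `A` live. -/
def mid (k : Fin (n - 2)) : Fin n := ⟨k + 1, by omega⟩

theorem Fin.sum_eq_first_add_sum_mid_add_last {M : Type*} [AddCommMonoid M] (hn : 2 ≤ n)
    (f : Fin n → M) :
    ∑ i, f i = f ⟨0, by omega⟩ + ∑ k : Fin (n - 2), f (mid k) + f ⟨n - 1, by omega⟩ := by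
  obtain ⟨N, rfl⟩ : ∃ N, n = N + 2 := ⟨n - 2, by omega⟩
  rw [Fin.sum_univ_succ, Fin.sum_univ_castSucc, ← add_assoc]
  congr 2

theorem Fin.forall_iff_first_mid_last (hn : 2 ≤ n) {P : Fin n → Prop} :
    (∀ i, P i) ↔ P ⟨0, by omega⟩ ∧ (∀ k, P (mid k)) ∧ P ⟨n - 1, by omega⟩ := by
  refine ⟨fun h => ⟨h _, fun k => h _, h _⟩, fun ⟨h0, hk, hl⟩ i => ?_⟩
  by_cases hi0 : (i : ℕ) = 0
  · exact (Fin.ext hi0 : i = ⟨0, _⟩) ▸ h0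
  by_cases hil : (i : ℕ) = n - 1
  · exact (Fin.ext hil : i = ⟨n - 1, _⟩) ▸ hl
  · exact (Fin.ext (by simp [mid]; omega) : mid ⟨i - 1, by omega⟩ = i) ▸ hk _

theorem hmatPerm_first (hm : 1 ≤ m) (hn : 2 ≤ n) :
    hmatPerm n m ⟨0, by omega⟩ = ⟨n - 1, by omega⟩ := by
  simp only [Fin.ext_iff, hmatPerm_val]
  split_ifs <;> omega

theorem hmatPerm_last (hm : 1 ≤ m) (hn : 2 ≤ n) :
    hmatPerm n m ⟨n - 1, by omega⟩ = ⟨0, by omega⟩ := by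
  simp only [Fin.ext_iff, hmatPerm_val]
  split_ifs <;> omega

theorem hmatPerm_mid (hm : 1 ≤ m) (k : Fin (n - 2)) :
    hmatPerm n m (mid k) = mid (hmatPerm (n - 2) (m - 1) k) := by
  have := k.2
  simp only [Fin.ext_iff, hmatPerm_val, mid]
  split_ifs <;> omega

theorem Hmat_first_first (hm : 1 ≤ m) (hn : 2 ≤ n) :
    Hmat n m ⟨0, by omega⟩ ⟨0, by omega⟩ = 0 := by
  simp [Hmat_apply, hmatPerm_first hm hn]; omega

theorem Hmat_first_mid (hm : 1 ≤ m) (hn : 2 ≤ n) (l : Fin (n - 2)) :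
    Hmat n m ⟨0, by omega⟩ (mid l) = 0 := by
  simp [Hmat_apply, hmatPerm_first hm hn, mid]; omega

theorem Hmat_first_last (hm : 1 ≤ m) (hn : 2 ≤ n) :
    Hmat n m ⟨0, by omega⟩ ⟨n - 1, by omega⟩ = 1 := by
  simp [Hmat_apply, hmatPerm_first hm hn]

theorem Hmat_mid_first (hm : 1 ≤ m) (hn : 2 ≤ n) (k : Fin (n - 2)) :
    Hmat n m (mid k) ⟨0, by omega⟩ = 0 := by
  rw [Hmat_apply, hmatPerm_mid hm]
  simp [mid]

theorem Hmat_mid_mid (hm : 1 ≤ m) (k l : Fin (n - 2)) :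
    Hmat n m (mid k) (mid l) = Hmat (n - 2) (m - 1) k l := by
  rw [Hmat_apply, Hmat_apply, hmatPerm_mid hm]
  simp [mid, Fin.ext_iff]

theorem Hmat_mid_last (hm : 1 ≤ m) (hn : 2 ≤ n) (k : Fin (n - 2)) :
    Hmat n m (mid k) ⟨n - 1, by omega⟩ = 0 := by
  have := (hmatPerm (n - 2) (m - 1) k).2
  rw [Hmat_apply, hmatPerm_mid hm]
  simp [mid]; omega

theorem Hmat_last_first (hm : 1 ≤ m) (hn : 2 ≤ n) :
    Hmat n m ⟨n - 1, by omega⟩ ⟨0, by omega⟩ = 1 := by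
  simp [Hmat_apply, hmatPerm_last hm hn]

theorem Hmat_last_mid (hm : 1 ≤ m) (hn : 2 ≤ n) (l : Fin (n - 2)) :
    Hmat n m ⟨n - 1, by omega⟩ (mid l) = 0 := by
  simp [Hmat_apply, hmatPerm_last hm hn, mid]

theorem Hmat_last_last (hm : 1 ≤ m) (hn : 2 ≤ n) :
    Hmat n m ⟨n - 1, by omega⟩ ⟨n - 1, by omega⟩ = 0 := by
  simp [Hmat_apply, hmatPerm_last hm hn]; omega

theorem dotProduct_Hmat_mulVec_eq (hm : 1 ≤ m) (hn : 2 ≤ n) (u v : Fin n → ℂ) :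
    u ⬝ᵥ Hmat n m *ᵥ v =
      u ⟨0, by omega⟩ * v ⟨n - 1, by omega⟩ + u ⟨n - 1, by omega⟩ * v ⟨0, by omega⟩
        + (fun k => u (mid k)) ⬝ᵥ Hmat (n - 2) (m - 1) *ᵥ (fun k => v (mid k)) := by
  rw [dotProduct, Fin.sum_eq_first_add_sum_mid_add_last hn]
  simp only [Hmat_mulVec_apply, hmatPerm_first hm hn, hmatPerm_last hm hn, hmatPerm_mid hm,
    dotProduct]
  ring

theorem transpose_mul_Hmat_mul_map_apply (hm : 1 ≤ m) (hn : 2 ≤ n) (σ : ℂ →+* ℂ)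
    (U : Matrix (Fin n) (Fin n) ℂ) (i j : Fin n) :
    (Uᵀ * Hmat n m * U.map σ) i j =
      U ⟨0, by omega⟩ i * σ (U ⟨n - 1, by omega⟩ j) + U ⟨n - 1, by omega⟩ i * σ (U ⟨0, by omega⟩ j)
        + (fun k => U (mid k) i) ⬝ᵥ Hmat (n - 2) (m - 1) *ᵥ (fun k => σ (U (mid k) j)) := by
  rw [mul_mul_apply, dotProduct_Hmat_mulVec_eq hm hn]
  rfl

section mkS

variable {μ c : ℂ} {x : Fin (n - 2) → ℂ} {A : Matrix (Fin (n - 2)) (Fin (n - 2)) ℂ}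

theorem mkS_first_first (hn : 2 ≤ n) : mkS n m μ c x A ⟨0, by omega⟩ ⟨0, by omega⟩ = μ := by
  simp [mkS]

theorem mkS_first_mid (hn : 2 ≤ n) (l : Fin (n - 2)) :
    mkS n m μ c x A ⟨0, by omega⟩ (mid l) =
      -μ * (star x ⬝ᵥ Hmat (n - 2) (m - 1) *ᵥ (fun k => A k l)) := by
  simp [mkS, mid, show (l : ℕ) + 1 ≠ n - 1 by omega, dotProduct, mulVec, Finset.mul_sum,
    mul_assoc]

theorem mkS_first_last (hn : 2 ≤ n) : mkS n m μ c x A ⟨0, by omega⟩ ⟨n - 1, by omega⟩ = c := by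
  simp [mkS, show n - 1 ≠ 0 by omega]

theorem mkS_mid_first (hn : 2 ≤ n) (k : Fin (n - 2)) :
    mkS n m μ c x A (mid k) ⟨0, by omega⟩ = 0 := by
  simp [mkS, mid, show (k : ℕ) + 1 ≠ n - 1 by omega]

theorem mkS_mid_mid (k l : Fin (n - 2)) : mkS n m μ c x A (mid k) (mid l) = A k l := by
  simp [mkS, mid, show (k : ℕ) + 1 ≠ n - 1 by omega, show (l : ℕ) + 1 ≠ n - 1 by omega]

theorem mkS_mid_last (hn : 2 ≤ n) (k : Fin (n - 2)) :
    mkS n m μ c x A (mid k) ⟨n - 1, by omega⟩ = x k := by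
  simp [mkS, mid, show (k : ℕ) + 1 ≠ n - 1 by omega, show n - 1 ≠ 0 by omega]

theorem mkS_last_first (hn : 2 ≤ n) : mkS n m μ c x A ⟨n - 1, by omega⟩ ⟨0, by omega⟩ = 0 := by
  simp [mkS, show n - 1 ≠ 0 by omega, show 0 ≠ n - 1 by omega]

theorem mkS_last_mid (hn : 2 ≤ n) (l : Fin (n - 2)) :
    mkS n m μ c x A ⟨n - 1, by omega⟩ (mid l) = 0 := by
  simp [mkS, mid, show (l : ℕ) + 1 ≠ n - 1 by omega, show n - 1 ≠ 0 by omega]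

theorem mkS_last_last (hn : 2 ≤ n) :
    mkS n m μ c x A ⟨n - 1, by omega⟩ ⟨n - 1, by omega⟩ = (starRingEnd ℂ μ)⁻¹ := by
  simp [mkS, show n - 1 ≠ 0 by omega]

theorem stabilizesBasisLine_mkS (hn : 2 ≤ n) (hμ : μ ≠ 0) :
    StabilizesBasisLine (mkS n m μ c x A) ⟨0, by omega⟩ := by
  refine ⟨(Fin.forall_iff_first_mid_last hn).mpr
    ⟨fun h => absurd rfl h, fun k _ => mkS_mid_first hn k, fun _ => mkS_last_first hn⟩, ?_⟩
  rwa [mkS_first_first hn]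

theorem preservesForm_mkS (hm : 1 ≤ m) (hn : 2 ≤ n) (hμ : μ ≠ 0)
    (hA : PreservesForm (starRingEnd ℂ) (Hmat (n - 2) (m - 1)) A)
    (hre : 2 * (c / μ).re + (x ⬝ᵥ Hmat (n - 2) (m - 1) *ᵥ star x).re = 0) :
    PreservesForm (starRingEnd ℂ) (Hmat n m) (mkS n m μ c x A) := by
  have hQ : star (x ⬝ᵥ Hmat (n - 2) (m - 1) *ᵥ star x) = x ⬝ᵥ Hmat (n - 2) (m - 1) *ᵥ star x := by
    rw [star_dotProduct_Hmat_mulVec, star_star, dotProduct_Hmat_mulVec_comm]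
  have hstar : (fun k => starRingEnd ℂ (x k)) = star x := rfl
  have hμ' : starRingEnd ℂ μ ≠ 0 := by simpa using hμ
  unfold PreservesForm at hA ⊢
  ext i j
  revert i j
  simp only [Fin.forall_iff_first_mid_last hn, transpose_mul_Hmat_mul_map_apply hm hn,
    mkS_first_first hn, mkS_first_mid hn, mkS_first_last hn, mkS_mid_first hn, mkS_mid_mid,
    mkS_mid_last hn, mkS_last_first hn, mkS_last_mid hn, mkS_last_last hn,
    Hmat_first_first hm hn, Hmat_first_mid hm hn, Hmat_first_last hm hn, Hmat_mid_first hm hn,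
    Hmat_mid_mid hm, Hmat_mid_last hm hn, Hmat_last_first hm hn, Hmat_last_mid hm hn,
    Hmat_last_last hm hn, map_zero, mul_zero, zero_mul, add_zero, zero_add, ← Pi.zero_def,
    zero_dotProduct, mulVec_zero, dotProduct_zero, hstar, map_inv₀, Complex.conj_conj]
  -- remaining: the (mid, mid), (mid, last), (last, mid) and (last, last) entries
  refine ⟨⟨trivial, fun l => trivial, mul_inv_cancel₀ hμ⟩, fun k => ⟨trivial, fun l => ?_, ?_⟩,
    inv_mul_cancel₀ hμ', fun l => ?_, ?_⟩
  · rw [← congrFun₂ hA k l, mul_mul_apply]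
    rfl
  · rw [dotProduct_Hmat_mulVec_comm _ _ (star x)]
    field_simp
    ring
  · rw [map_mul, map_neg, starRingEnd_apply (star x ⬝ᵥ _), star_dotProduct_Hmat_mulVec, star_star]
    field_simp
    exact neg_add_cancel _
  · rw [Complex.mul_inv_add_conj_inv_mul_conj, ← Complex.conj_eq_iff_re.mp hQ]
    exact_mod_cast hre

end mkS

theorem last_row_of_preservesForm (hm : 1 ≤ m) (hn : 2 ≤ n) {U : Matrix (Fin n) (Fin n) ℂ}
    (hU : PreservesForm (starRingEnd ℂ) (Hmat n m) U)
    (hcol : StabilizesBasisLine U ⟨0, by omega⟩) :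
    U ⟨n - 1, by omega⟩ ⟨n - 1, by omega⟩ = (starRingEnd ℂ (U ⟨0, by omega⟩ ⟨0, by omega⟩))⁻¹ ∧
      ∀ l, U ⟨n - 1, by omega⟩ (mid l) = 0 := by
  have entry (j : Fin n) := (transpose_mul_Hmat_mul_map_apply hm hn _ U ⟨0, by omega⟩ j).symm.trans
    (congrFun₂ hU ⟨0, by omega⟩ j)
  have hwz : U ⟨n - 1, by omega⟩ ⟨0, by omega⟩ = 0 := hcol.1 _ (by simp [Fin.ext_iff]; omega)
  have hez (k : Fin (n - 2)) : U (mid k) ⟨0, by omega⟩ = 0 := hcol.1 _ (by simp [Fin.ext_iff, mid])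
  simp only [hwz, hez, zero_mul, add_zero, ← Pi.zero_def, zero_dotProduct] at entry
  constructor
  · have h := congrArg (starRingEnd ℂ) (entry ⟨n - 1, by omega⟩)
    rw [Hmat_first_last hm hn, map_mul, Complex.conj_conj, map_one] at h
    exact eq_inv_of_mul_eq_one_right h
  · intro l
    simpa [Hmat_first_mid hm hn, hcol.2] using entry (mid l)

theorem inS_of_preservesForm (hm : 1 ≤ m) (hn : 2 ≤ n) {U : Matrix (Fin n) (Fin n) ℂ}
    (hU : PreservesForm (starRingEnd ℂ) (Hmat n m) U)
    (hcol : StabilizesBasisLine U ⟨0, by omega⟩) :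
    inS n m U := by
  have hμ := hcol.2
  have entry (i j : Fin n) := (transpose_mul_Hmat_mul_map_apply hm hn _ U i j).symm.trans
    (congrFun₂ hU i j)
  have hstar : (fun k => starRingEnd ℂ (U (mid k) ⟨n - 1, by omega⟩)) =
      star (fun k => U (mid k) ⟨n - 1, by omega⟩) := rfl
  have hwz : U ⟨n - 1, by omega⟩ ⟨0, by omega⟩ = 0 := hcol.1 _ (by simp [Fin.ext_iff]; omega)
  have hez (k : Fin (n - 2)) : U (mid k) ⟨0, by omega⟩ = 0 := hcol.1 _ (by simp [Fin.ext_iff, mid])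
  obtain ⟨hww, hwe⟩ := last_row_of_preservesForm hm hn hU hcol
  have hze (l : Fin (n - 2)) : U ⟨0, by omega⟩ (mid l) = -U ⟨0, by omega⟩ ⟨0, by omega⟩ *
      (star (fun k => U (mid k) ⟨n - 1, by omega⟩) ⬝ᵥ
        Hmat (n - 2) (m - 1) *ᵥ fun k => U (mid k) (mid l)) := by
    have h := entry (mid l) ⟨n - 1, by omega⟩
    simp only [hww, hwe, Hmat_mid_last hm hn, zero_mul, add_zero, map_inv₀, Complex.conj_conj,
      hstar] at h
    rw [dotProduct_Hmat_mulVec_comm] at h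
    field_simp at h
    linear_combination h
  refine ⟨U ⟨0, by omega⟩ ⟨0, by omega⟩, U ⟨0, by omega⟩ ⟨n - 1, by omega⟩,
    fun k => U (mid k) ⟨n - 1, by omega⟩, U.submatrix mid mid, hμ, ?_, ?_, ?_⟩
  · ext k l
    have h := entry (mid k) (mid l)
    simp only [hwe, Hmat_mid_mid hm, map_zero, mul_zero, zero_mul, add_zero, zero_add] at h
    rw [mul_mul_apply]
    exact h
  · have h := entry ⟨n - 1, by omega⟩ ⟨n - 1, by omega⟩
    simp only [hww, Hmat_last_last hm hn, map_inv₀, Complex.conj_conj,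
      Complex.mul_inv_add_conj_inv_mul_conj, hstar] at h
    simpa using congrArg Complex.re h
  · ext i j
    revert i j
    simp [Fin.forall_iff_first_mid_last hn, mkS_first_first hn, mkS_first_mid hn,
      mkS_first_last hn, mkS_mid_first hn, mkS_mid_mid, mkS_mid_last hn, mkS_last_first hn,
      mkS_last_mid hn, mkS_last_last hn, hwz, hez, hww, hwe, hze]

theorem inS_iff (hm : 1 ≤ m) (hn : 2 ≤ n) (U : Matrix (Fin n) (Fin n) ℂ) :
    inS n m U ↔ PreservesForm (starRingEnd ℂ) (Hmat n m) U ∧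
      StabilizesBasisLine U ⟨0, by omega⟩ := by
  refine ⟨?_, fun ⟨hU, hcol⟩ => inS_of_preservesForm hm hn hU hcol⟩
  rintro ⟨μ, c, x, A, hμ, hA, hre, rfl⟩
  exact ⟨preservesForm_mkS hm hn hμ hA hre, stabilizesBasisLine_mkS hn hμ⟩

end Blocks

theorem stmt2_general (n m : ℕ) (hm : 1 ≤ m) (hn : 3 ≤ n) :
    inS n m (1 : Matrix (Fin n) (Fin n) ℂ) ∧
    (∀ U V : Matrix (Fin n) (Fin n) ℂ, inS n m U → inS n m V → inS n m (U * V)) ∧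
    (∀ U : Matrix (Fin n) (Fin n) ℂ, inS n m U → IsUnit U ∧ inS n m U⁻¹) ∧
    (∀ U : Matrix (Fin n) (Fin n) ℂ, inS n m U →
      U.transpose * Hmat n m * U.map (starRingEnd ℂ) = Hmat n m) := by
  have hH : IsUnit (Hmat n m) := IsUnit.of_mul_eq_one _ (Hmat_mul_self n m)
  simp only [inS_iff hm (by omega : 2 ≤ n)]
  refine ⟨⟨PreservesForm.one, StabilizesBasisLine.one⟩, ?_, ?_, fun U hU => hU.1⟩
  · rintro U V ⟨hU, hUcol⟩ ⟨hV, hVcol⟩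
    exact ⟨hU.mul hV, hUcol.mul hVcol⟩
  · rintro U ⟨hU, hUcol⟩
    have hunit := hU.isUnit hH
    exact ⟨hunit, hU.inv hH, hUcol.inv hunit⟩

/-- S is a subgroup of GLₙ(ℂ) contained in U(H). -/
theorem stmt2 (n m : ℕ) (hm : 1 ≤ m) (hn : 3 ≤ n) (hnm : 2 * m ≤ n) :
    inS n m (1 : Matrix (Fin n) (Fin n) ℂ) ∧
    (∀ U V : Matrix (Fin n) (Fin n) ℂ, inS n m U → inS n m V → inS n m (U * V)) ∧
    (∀ U : Matrix (Fin n) (Fin n) ℂ, inS n m U → IsUnit U ∧ inS n m U⁻¹) ∧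
    (∀ U : Matrix (Fin n) (Fin n) ℂ, inS n m U →
      U.transpose * Hmat n m * U.map (starRingEnd ℂ) = Hmat n m) :=
  stmt2_general n m hm hn
end

section
/- Let n ≥ 2m with m ≥ 1 and n ≥ 2. The real vector space s := {X ∈ Mₙ(ℂ) : Xᵀ H + H X̄ = 0 and X_{i1} = 0 for all i = 2,…,n} has real dimension n² − 2n + 3. (This space is the Lie algebra of the group S appearing in the paper's Lemma.) -/
/-- The real vector space s = {X ∈ u(H) : X_{i1} = 0 for i = 2,…,n}, the Lie
algebra of the group S of the paper's Lemma. -/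
noncomputable def sAlg (n m : ℕ) : Submodule ℝ (Matrix (Fin n) (Fin n) ℂ) where
  carrier := {X | X.transpose * Hmat n m + Hmat n m * X.map (starRingEnd ℂ) = 0 ∧
    ∀ i : Fin n, i.1 ≠ 0 → X i ⟨0, Nat.pos_of_ne_zero (fun h => by subst h; exact absurd i.isLt (by omega))⟩ = 0}
  zero_mem' := by
    constructor
    · simp
    · intro i hi; simp
  add_mem' := by
    rintro X Y ⟨hX1, hX2⟩ ⟨hY1, hY2⟩
    constructor
    · have hmap : (X + Y).map (starRingEnd ℂ) =
          X.map (starRingEnd ℂ) + Y.map (starRingEnd ℂ) := by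
        ext i j; simp
      rw [Matrix.transpose_add, hmap, Matrix.add_mul, Matrix.mul_add]
      have : X.transpose * Hmat n m + Y.transpose * Hmat n m +
          (Hmat n m * X.map (starRingEnd ℂ) + Hmat n m * Y.map (starRingEnd ℂ)) =
          (X.transpose * Hmat n m + Hmat n m * X.map (starRingEnd ℂ)) +
          (Y.transpose * Hmat n m + Hmat n m * Y.map (starRingEnd ℂ)) := by abel
      rw [this, hX1, hY1, add_zero]
    · intro i hi
      simp [Matrix.add_apply, hX2 i hi, hY2 i hi]
  smul_mem' := by
    rintro r X ⟨hX1, hX2⟩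
    constructor
    · have hmap : (r • X).map (starRingEnd ℂ) = r • X.map (starRingEnd ℂ) := by
        ext i j
        simp [Matrix.map_apply, Complex.real_smul, map_mul, Complex.conj_ofReal]
      rw [Matrix.transpose_smul, hmap, smul_mul_assoc, mul_smul_comm, ← smul_add, hX1,
        smul_zero]
    · intro i hi
      simp [Matrix.smul_apply, hX2 i hi]

open Module Finset Matrix Complex

section RealForm

variable {V : Type*} [AddCommGroup V] [Module ℂ V] [Module ℝ V] [IsScalarTower ℝ ℂ V]
  (W : Submodule ℂ V) (τ : V →ₗ[ℝ] V)

variable (V) in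
noncomputable def mulIEquiv : V ≃ₗ[ℝ] V :=
  DistribMulAction.toLinearEquiv ℝ V (Units.mk0 I I_ne_zero)

theorem mulIEquiv_apply (v : V) : mulIEquiv V v = I • v := rfl

noncomputable def antiFixed : Submodule ℝ V := W.restrictScalars ℝ ⊓ LinearMap.ker (τ + 1)

variable {W τ}

theorem antiFixed_inf_map_mulIEquiv (hτ_I : ∀ v, τ (I • v) = -(I • τ v)) :
    antiFixed W τ ⊓ (antiFixed W τ).map (mulIEquiv V : V →ₗ[ℝ] V) = ⊥ := by
  rw [eq_bot_iff]
  rintro _ ⟨⟨-, hv⟩, ⟨w, ⟨-, hw⟩, rfl⟩⟩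
  simp only [SetLike.mem_coe, LinearMap.mem_ker, LinearMap.add_apply, Module.End.one_apply,
    LinearEquiv.coe_coe, mulIEquiv_apply, hτ_I] at hv hw ⊢
  rw [eq_neg_of_add_eq_zero_left hw, smul_neg, neg_neg, ← two_smul ℝ, smul_eq_zero] at hv
  exact (Submodule.mem_bot ℝ).2 (hv.resolve_left two_ne_zero)

theorem antiFixed_sup_map_mulIEquiv (hτ_I : ∀ v, τ (I • v) = -(I • τ v))
    (hτ_τ : ∀ v, τ (τ v) = v) (hτ_W : ∀ v ∈ W, τ v ∈ W) :
    antiFixed W τ ⊔ (antiFixed W τ).map (mulIEquiv V : V →ₗ[ℝ] V) = W.restrictScalars ℝ := by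
  refine le_antisymm (sup_le inf_le_left ?_) fun v hv => ?_
  · rintro _ ⟨w, ⟨hw, -⟩, rfl⟩
    exact W.smul_mem I hw
  have hτv : τ v ∈ W := hτ_W v hv
  -- `v = a + I • b` with `a = (v - τ v) / 2` and `b = -I • (v + τ v) / 2`, both in `antiFixed`
  refine Submodule.mem_sup.2 ⟨(2⁻¹ : ℝ) • (v - τ v), ⟨?_, ?_⟩,
    mulIEquiv V ((2⁻¹ : ℝ) • -(I • (v + τ v))), ⟨_, ⟨?_, ?_⟩, rfl⟩, ?_⟩
  · exact (W.restrictScalars ℝ).smul_mem _ (W.sub_mem hv hτv)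
  · simp only [SetLike.mem_coe, LinearMap.mem_ker, LinearMap.add_apply, Module.End.one_apply,
      map_smul, map_sub, hτ_τ]
    module
  · exact (W.restrictScalars ℝ).smul_mem _ (W.neg_mem (W.smul_mem I (W.add_mem hv hτv)))
  · simp only [SetLike.mem_coe, LinearMap.mem_ker, LinearMap.add_apply, Module.End.one_apply,
      map_smul, map_neg, hτ_I, map_add, hτ_τ]
    module
  · rw [mulIEquiv_apply, smul_comm, smul_neg, smul_smul, I_mul_I, neg_one_smul, neg_neg]
    module

theorem finrank_antiFixed [FiniteDimensional ℂ W] (hτ_I : ∀ v, τ (I • v) = -(I • τ v))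
    (hτ_τ : ∀ v, τ (τ v) = v) (hτ_W : ∀ v ∈ W, τ v ∈ W) :
    finrank ℝ (antiFixed W τ) = finrank ℂ W := by
  have : FiniteDimensional ℝ W := Module.Finite.trans ℂ W
  have : FiniteDimensional ℝ (W.restrictScalars ℝ) := this
  have : FiniteDimensional ℝ (antiFixed W τ) :=
    Submodule.finiteDimensional_of_le (S₂ := W.restrictScalars ℝ) inf_le_left
  have hsum := Submodule.finrank_sup_add_finrank_inf_eq (antiFixed W τ)
    ((antiFixed W τ).map (mulIEquiv V : V →ₗ[ℝ] V))
  rw [antiFixed_inf_map_mulIEquiv hτ_I, antiFixed_sup_map_mulIEquiv hτ_I hτ_τ hτ_W, finrank_bot,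
    LinearEquiv.finrank_map_eq] at hsum
  have hW : finrank ℝ (W.restrictScalars ℝ) = 2 * finrank ℂ W := by
    rw [← Complex.finrank_real_complex, Module.finrank_mul_finrank]; rfl
  omega

end RealForm

namespace Matrix

variable {ι κ : Type*} (R : Type*) [Semiring R]

def supported (S : Set (ι × κ)) : Submodule R (Matrix ι κ R) where
  carrier := {X | ∀ i j, (i, j) ∉ S → X i j = 0}
  zero_mem' _ _ _ := rfl
  add_mem' hX hY i j h := by simp [hX i j h, hY i j h]
  smul_mem' c X hX i j h := by simp [hX i j h]

def supportedEquivFun [DecidableEq ι] [DecidableEq κ] (S : Finset (ι × κ)) :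
    supported R (S : Set (ι × κ)) ≃ₗ[R] (S → R) where
  toFun X p := X.1 p.1.1 p.1.2
  map_add' _ _ := rfl
  map_smul' _ _ := rfl
  invFun f := ⟨fun i j => if h : (i, j) ∈ S then f ⟨(i, j), h⟩ else 0, fun i j h => dif_neg h⟩
  left_inv X := by
    ext i j
    by_cases h : (i, j) ∈ S
    · simp [h]
    · simp [h, X.2 i j h]
  right_inv f := by
    ext p
    simp

theorem finrank_supported [StrongRankCondition R] [DecidableEq ι] [DecidableEq κ]
    (S : Finset (ι × κ)) :
    finrank R (supported R (S : Set (ι × κ))) = #S := by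
  rw [(supportedEquivFun R S).finrank_eq, finrank_fintype_fun_eq_card, Fintype.card_coe]

end Matrix

section PermAdjoint

variable {ι : Type*} [Fintype ι] [DecidableEq ι]

def colRowSupport (a b : ι) : Finset (ι × ι) :=
  {p | (p.2 = a → p.1 = a) ∧ (p.1 = b → p.2 = b)}

theorem mem_colRowSupport {a b : ι} {p : ι × ι} :
    p ∈ colRowSupport a b ↔ (p.2 = a → p.1 = a) ∧ (p.1 = b → p.2 = b) := by
  simp [colRowSupport]

theorem card_colRowSupport {a b : ι} (hab : a ≠ b) :
    #(colRowSupport a b) = Fintype.card ι ^ 2 - 2 * Fintype.card ι + 3 := by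
  have hcompl : ({p | ¬((p.2 = a → p.1 = a) ∧ (p.1 = b → p.2 = b))} : Finset (ι × ι)) =
      (univ.erase a ×ˢ {a}) ∪ ({b} ×ˢ univ.erase b) := by
    ext ⟨i, j⟩
    simp only [mem_filter, mem_univ, true_and, mem_union, mem_product, mem_erase, mem_singleton]
    tauto
  have hinter : (univ.erase a ×ˢ {a}) ∩ ({b} ×ˢ univ.erase b) = {(b, a)} := by
    ext ⟨i, j⟩
    simp only [mem_inter, mem_univ, mem_product, mem_erase, mem_singleton, Prod.mk.injEq]
    constructor
    · tauto
    · rintro ⟨rfl, rfl⟩; exact ⟨⟨⟨hab.symm, trivial⟩, rfl⟩, rfl, hab, trivial⟩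
  have hsplit := card_filter_add_card_filter_not (s := (univ : Finset (ι × ι)))
    (fun p : ι × ι => (p.2 = a → p.1 = a) ∧ (p.1 = b → p.2 = b))
  have hunion := card_union_add_card_inter (univ.erase a ×ˢ {a}) ({b} ×ˢ univ.erase b)
  rw [← hcompl, hinter] at hunion
  simp only [card_product, card_erase_of_mem (mem_univ _), card_singleton, card_univ,
    Fintype.card_prod] at hunion hsplit
  have h2 : 2 ≤ Fintype.card ι := Fintype.one_lt_card_iff.2 ⟨a, b, hab⟩
  have : 2 * Fintype.card ι ≤ Fintype.card ι * Fintype.card ι := Nat.mul_le_mul_right _ h2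
  rw [colRowSupport, sq]
  omega

-- For an involution `σ`, the Lie algebra of the unitary group of `P` is its `-1`-eigenspace.
noncomputable def permAdjoint (σ : Equiv.Perm ι) : Matrix ι ι ℂ →ₗ[ℝ] Matrix ι ι ℂ where
  toFun X := σ.permMatrix ℂ * Xᴴ * σ.permMatrix ℂ
  map_add' X Y := by rw [conjTranspose_add, mul_add, add_mul]
  map_smul' r X := by simp

theorem permAdjoint_apply (σ : Equiv.Perm ι) (X : Matrix ι ι ℂ) (i j : ι) :
    permAdjoint σ X i j = star (X (σ.symm j) (σ i)) := by
  simp [permAdjoint, PEquiv.toMatrix_toPEquiv_mul, PEquiv.mul_toMatrix_toPEquiv]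

theorem permAdjoint_permAdjoint (σ : Equiv.Perm ι) (X : Matrix ι ι ℂ) :
    permAdjoint σ (permAdjoint σ X) = X := by
  ext i j
  simp [permAdjoint_apply]

theorem permAdjoint_I_smul (σ : Equiv.Perm ι) (X : Matrix ι ι ℂ) :
    permAdjoint σ (I • X) = -(I • permAdjoint σ X) := by
  ext i j
  simp [permAdjoint_apply]

theorem transpose_mul_permMatrix_add_eq_zero_iff {σ : Equiv.Perm ι} (hσ : Function.Involutive σ)
    (X : Matrix ι ι ℂ) :
    Xᵀ * σ.permMatrix ℂ + σ.permMatrix ℂ * X.map (starRingEnd ℂ) = 0 ↔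
      permAdjoint σ X + X = 0 := by
  have hsymm : ∀ i, σ.symm i = σ i := fun i => σ.symm_apply_eq.2 (hσ i).symm
  simp only [PEquiv.toMatrix_toPEquiv_mul, PEquiv.mul_toMatrix_toPEquiv, ← Matrix.ext_iff]
  simp only [Matrix.add_apply, submatrix_apply, id_eq, transpose_apply, map_apply,
    permAdjoint_apply, hsymm, Matrix.zero_apply]
  constructor <;> intro h i j <;>
    simpa [hσ i, add_comm] using congrArg (starRingEnd ℂ) (h (σ i) j)

variable {σ : Equiv.Perm ι} {a b : ι}

theorem permAdjoint_mem_supported (hσ : Function.Involutive σ) (hab : σ a = b)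
    {X : Matrix ι ι ℂ} (hX : X ∈ supported ℂ (colRowSupport a b : Set (ι × ι))) :
    permAdjoint σ X ∈ supported ℂ (colRowSupport a b : Set (ι × ι)) := by
  have hba : σ b = a := hab ▸ hσ a
  intro i j hij
  rw [permAdjoint_apply, σ.symm_apply_eq.2 (hσ j).symm, hX, star_zero]
  simp only [mem_coe, mem_colRowSupport, hσ.eq_iff, hab, hba] at hij ⊢
  tauto

theorem forall_apply_eq_zero_iff_mem_supported (hσ : Function.Involutive σ) (hab : σ a = b)
    {X : Matrix ι ι ℂ} (hX : permAdjoint σ X + X = 0) :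
    (∀ i, i ≠ a → X i a = 0) ↔ X ∈ supported ℂ (colRowSupport a b : Set (ι × ι)) := by
  refine ⟨fun h i j hij => ?_, fun h i hi => h i a (by simp [mem_colRowSupport, hi])⟩
  simp only [mem_coe, mem_colRowSupport, not_and_or, Classical.not_imp] at hij
  rcases hij with ⟨rfl, hi⟩ | ⟨rfl, hj⟩
  · exact h i hi
  · -- the row `b` of `X = -P Xᴴ P` is the conjugated column `a` of `X`, permuted by `σ`
    have hba : σ i = a := hab ▸ hσ a
    rw [eq_neg_of_add_eq_zero_right hX, neg_apply, permAdjoint_apply, hba,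
      σ.symm_apply_eq.2 (hσ j).symm,
      h (σ j) fun hja => hj (by rw [← hab, ← hja, hσ]), star_zero, neg_zero]

theorem finrank_antiFixed_permAdjoint (hσ : Function.Involutive σ) (hab : σ a = b)
    (hne : a ≠ b) :
    finrank ℝ (antiFixed (supported ℂ (colRowSupport a b : Set (ι × ι))) (permAdjoint σ)) =
      Fintype.card ι ^ 2 - 2 * Fintype.card ι + 3 := by
  rw [finrank_antiFixed (permAdjoint_I_smul σ) (permAdjoint_permAdjoint σ)
    (fun X => permAdjoint_mem_supported hσ hab), finrank_supported, card_colRowSupport hne]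

end PermAdjoint

def antiDiagSwap (n m : ℕ) (i : Fin n) : Fin n :=
  if (i : ℕ) < m ∨ n ≤ i + m then i.rev else i

theorem antiDiagSwap_involutive (n m : ℕ) : Function.Involutive (antiDiagSwap n m) := by
  intro i
  unfold antiDiagSwap
  split_ifs <;> grind [Fin.rev_rev]

theorem Hmat_eq_permMatrix (n m : ℕ) :
    Hmat n m = (antiDiagSwap_involutive n m).toPerm.permMatrix ℂ := by
  ext i j
  have := i.isLt
  simp only [Hmat, PEquiv.toMatrix_apply, Equiv.toPEquiv_apply, Option.mem_def,
    Option.some.injEq, Function.Involutive.coe_toPerm, antiDiagSwap]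
  split_ifs <;> simp only [Fin.ext_iff, Fin.val_rev] at * <;> omega

theorem antiDiagSwap_of_val_eq_zero {n m : ℕ} (hm : 1 ≤ m) {i : Fin n} (hi : (i : ℕ) = 0) :
    antiDiagSwap n m i = i.rev :=
  if_pos (.inl (by omega))

theorem sAlg_eq_antiFixed {n m : ℕ} (hm : 1 ≤ m) (hn : 0 < n) :
    sAlg n m = antiFixed (supported ℂ (colRowSupport ⟨0, hn⟩ (Fin.rev ⟨0, hn⟩) : Set _))
      (permAdjoint (antiDiagSwap_involutive n m).toPerm) := by
  have hσ := antiDiagSwap_involutive n m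
  have hab := antiDiagSwap_of_val_eq_zero hm (i := ⟨0, hn⟩) rfl
  ext X
  change (_ ∧ _) ↔ X ∈ supported ℂ _ ∧ permAdjoint _ X + X = 0
  rw [Hmat_eq_permMatrix, transpose_mul_permMatrix_add_eq_zero_iff hσ]
  refine and_comm.trans (and_congr_left fun hX => ?_)
  rw [← forall_apply_eq_zero_iff_mem_supported hσ hab hX]
  exact forall_congr' fun i => imp_congr_left (by simp [Fin.ext_iff])

theorem stmt4_general {n m : ℕ} (hm : 1 ≤ m) (hn : 2 ≤ n) :
    Module.finrank ℝ (sAlg n m) = n ^ 2 - 2 * n + 3 := by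
  have hne : (⟨0, by omega⟩ : Fin n) ≠ Fin.rev ⟨0, by omega⟩ := by
    simp only [ne_eq, Fin.ext_iff, Fin.val_rev]
    omega
  rw [sAlg_eq_antiFixed hm (by omega),
    finrank_antiFixed_permAdjoint (antiDiagSwap_involutive n m)
      (antiDiagSwap_of_val_eq_zero hm rfl) hne,
    Fintype.card_fin]

/-- The Lie algebra s of the group S has real dimension n² − 2n + 3. -/
theorem stmt4 {n m : ℕ} (hm : 1 ≤ m) (hnm : 2 * m ≤ n) (hn : 2 ≤ n) :
    Module.finrank ℝ (sAlg n m) = n ^ 2 - 2 * n + 3 :=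
  stmt4_general hm hn
end

section
/- For every invertible matrix B ∈ M₄(ℂ) with Bᵀ = −B, the real vector space {X ∈ M₄(ℂ) : Xᵀ B + B X = 0 and Xᵀ H + H X̄ = 0} has real dimension at most 10. (This is the Lie-algebra form of the paper's claim that dim(Sp₄(B,ℂ) ∩ SU(2,2)) ≤ 10.) -/
/-- The Hermitian matrix of signature (2,2) in anti-diagonal form:
⟨z,z⟩ = 2Re(z₁z̄₄) + 2Re(z₂z̄₃). -/
def H22 : Matrix (Fin 4) (Fin 4) ℂ :=
  !![0, 0, 0, 1; 0, 0, 1, 0; 0, 1, 0, 0; 1, 0, 0, 0]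

/-- The real vector space sp₄(B,ℂ) ∩ u(2,2) =
{X : Xᵀ B + B X = 0 and Xᵀ H + H X̄ = 0}. -/
noncomputable def spBCapU (B : Matrix (Fin 4) (Fin 4) ℂ) :
    Submodule ℝ (Matrix (Fin 4) (Fin 4) ℂ) where
  carrier := {X | X.transpose * B + B * X = 0 ∧
    X.transpose * H22 + H22 * X.map (starRingEnd ℂ) = 0}
  zero_mem' := by constructor <;> simp
  add_mem' := by
    rintro X Y ⟨hX1, hX2⟩ ⟨hY1, hY2⟩
    constructor
    · rw [Matrix.transpose_add, Matrix.add_mul, Matrix.mul_add]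
      have : X.transpose * B + Y.transpose * B + (B * X + B * Y) =
          (X.transpose * B + B * X) + (Y.transpose * B + B * Y) := by abel
      rw [this, hX1, hY1, add_zero]
    · have hmap : (X + Y).map (starRingEnd ℂ) =
          X.map (starRingEnd ℂ) + Y.map (starRingEnd ℂ) := by
        ext i j; simp only [Matrix.map_apply, Matrix.add_apply, map_add]
      rw [Matrix.transpose_add, hmap, Matrix.add_mul, Matrix.mul_add]
      have : X.transpose * H22 + Y.transpose * H22 +
          (H22 * X.map (starRingEnd ℂ) + H22 * Y.map (starRingEnd ℂ)) =
          (X.transpose * H22 + H22 * X.map (starRingEnd ℂ)) +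
          (Y.transpose * H22 + H22 * Y.map (starRingEnd ℂ)) := by abel
      rw [this, hX2, hY2, add_zero]
  smul_mem' := by
    rintro r X ⟨hX1, hX2⟩
    constructor
    · rw [Matrix.transpose_smul, smul_mul_assoc, mul_smul_comm, ← smul_add, hX1, smul_zero]
    · have hmap : (r • X).map (starRingEnd ℂ) = r • X.map (starRingEnd ℂ) := by
        ext i j
        simp only [Matrix.map_apply, Matrix.smul_apply, Complex.real_smul, map_mul,
          Complex.conj_ofReal]
      rw [Matrix.transpose_smul, hmap, smul_mul_assoc, mul_smul_comm, ← smul_add, hX2,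
        smul_zero]

noncomputable def Lmap (B : Matrix (Fin 4) (Fin 4) ℂ) :
    (spBCapU B × spBCapU B) →ₗ[ℝ] ({p : Fin 4 × Fin 4 // p.1 ≤ p.2} → ℂ) where
  toFun P := fun t =>
    (B * ((P.1 : Matrix (Fin 4) (Fin 4) ℂ) + Complex.I • (P.2 : Matrix (Fin 4) (Fin 4) ℂ)))
      t.1.1 t.1.2
  map_add' P Q := by
    funext t
    have h : ((P.1 + Q.1 : spBCapU B) : Matrix (Fin 4) (Fin 4) ℂ) +
        Complex.I • ((P.2 + Q.2 : spBCapU B) : Matrix (Fin 4) (Fin 4) ℂ) =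
        ((P.1 : Matrix (Fin 4) (Fin 4) ℂ) + Complex.I • (P.2 : Matrix (Fin 4) (Fin 4) ℂ)) +
        ((Q.1 : Matrix (Fin 4) (Fin 4) ℂ) + Complex.I • (Q.2 : Matrix (Fin 4) (Fin 4) ℂ)) := by
      push_cast
      rw [smul_add]; abel
    simp only [Prod.fst_add, Prod.snd_add, h, Matrix.mul_add, Matrix.add_apply, Pi.add_apply]
  map_smul' r P := by
    funext t
    have h : ((r • P.1 : spBCapU B) : Matrix (Fin 4) (Fin 4) ℂ) +
        Complex.I • ((r • P.2 : spBCapU B) : Matrix (Fin 4) (Fin 4) ℂ) =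
        r • ((P.1 : Matrix (Fin 4) (Fin 4) ℂ) + Complex.I • (P.2 : Matrix (Fin 4) (Fin 4) ℂ)) := by
      push_cast
      rw [smul_add, smul_comm r Complex.I]
    simp only [Prod.smul_fst, Prod.smul_snd, h, Matrix.mul_smul, Matrix.smul_apply,
      RingHom.id_apply, Pi.smul_apply]

/-- For every invertible skew-symmetric B ∈ M₄(ℂ),
dim_ℝ (sp₄(B,ℂ) ∩ su(2,2)) ≤ 10. -/
theorem stmt6 (B : Matrix (Fin 4) (Fin 4) ℂ) (hB : IsUnit B) (hskew : B.transpose = -B) :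
    Module.finrank ℝ (spBCapU B) ≤ 10 := by
  have hH : H22 * H22 = 1 := by
    ext i j; fin_cases i <;> fin_cases j <;>
      simp [H22, Matrix.mul_apply, Fin.sum_univ_four, Matrix.one_apply,
        Matrix.vecHead, Matrix.vecTail]
    -- injectivity of Lmap B
  have hinj : Function.Injective (Lmap B) := by
    rw [injective_iff_map_eq_zero]
    rintro ⟨X, Y⟩ h0
    obtain ⟨hX1, hX2⟩ := X.2
    obtain ⟨hY1, hY2⟩ := Y.2
    set Z : Matrix (Fin 4) (Fin 4) ℂ :=
      (X : Matrix (Fin 4) (Fin 4) ℂ) + Complex.I • (Y : Matrix (Fin 4) (Fin 4) ℂ) with hZ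
    have hupper : ∀ i j : Fin 4, i ≤ j → (B * Z) i j = 0 := by
      intro i j hij
      have := congrFun h0 ⟨(i, j), hij⟩
      simpa [Lmap] using this
    have hsym : (B * Z).transpose = B * Z := by
      have hX : (X : Matrix (Fin 4) (Fin 4) ℂ).transpose * B = -(B * X) :=
        eq_neg_of_add_eq_zero_left hX1
      have hY : (Y : Matrix (Fin 4) (Fin 4) ℂ).transpose * B = -(B * Y) :=
        eq_neg_of_add_eq_zero_left hY1
      rw [Matrix.transpose_mul, hZ, Matrix.transpose_add, Matrix.transpose_smul, hskew,
        Matrix.mul_neg, Matrix.add_mul, Matrix.smul_mul, hX, hY, Matrix.mul_add,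
        Matrix.mul_smul]
      rw [smul_neg, ← neg_add, neg_neg]
    have hBZ : B * Z = 0 := by
      ext i j
      rcases le_total i j with hij | hji
      · simpa using hupper i j hij
      · have h1 := hupper j i hji
        have h2 : (B * Z).transpose j i = (B * Z) j i := by rw [hsym]
        rw [Matrix.transpose_apply] at h2
        rw [h2, h1, Matrix.zero_apply]
    have hZ0 : Z = 0 := by
      obtain ⟨U, hU⟩ := hB
      calc Z = (↑U⁻¹ * ↑U) * Z := by rw [Units.inv_mul, one_mul]
      _ = ↑U⁻¹ * (B * Z) := by rw [mul_assoc, hU]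
      _ = 0 := by rw [hBZ, mul_zero]
    have hXY : (X : Matrix (Fin 4) (Fin 4) ℂ) =
        -(Complex.I • (Y : Matrix (Fin 4) (Fin 4) ℂ)) := by
      rw [hZ] at hZ0
      exact eq_neg_of_add_eq_zero_left hZ0
    have hXt : (X : Matrix (Fin 4) (Fin 4) ℂ).transpose =
        -(Complex.I • (Y : Matrix (Fin 4) (Fin 4) ℂ).transpose) := by
      rw [hXY, Matrix.transpose_neg, Matrix.transpose_smul]
    have hXc : (X : Matrix (Fin 4) (Fin 4) ℂ).map (starRingEnd ℂ) =
        Complex.I • (Y : Matrix (Fin 4) (Fin 4) ℂ).map (starRingEnd ℂ) := by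
      ext i j
      rw [Matrix.map_apply, hXY]
      simp [Complex.conj_I, mul_comm]
    rw [hXt, hXc] at hX2
    have h3 : Complex.I • (H22 * (Y : Matrix (Fin 4) (Fin 4) ℂ).map (starRingEnd ℂ)) -
        Complex.I • ((Y : Matrix (Fin 4) (Fin 4) ℂ).transpose * H22) = 0 := by
      rw [← hX2, Matrix.neg_mul, Matrix.smul_mul, Matrix.mul_smul]
      abel
    have h4 : H22 * (Y : Matrix (Fin 4) (Fin 4) ℂ).map (starRingEnd ℂ) =
        (Y : Matrix (Fin 4) (Fin 4) ℂ).transpose * H22 := by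
      rw [← smul_sub, smul_eq_zero] at h3
      rcases h3 with h | h
      · exact absurd h Complex.I_ne_zero
      · exact sub_eq_zero.mp h
    rw [← h4] at hY2
    have h5 : H22 * (Y : Matrix (Fin 4) (Fin 4) ℂ).map (starRingEnd ℂ) = 0 := by
      have h2 : (2 : ℂ) • (H22 * (Y : Matrix (Fin 4) (Fin 4) ℂ).map (starRingEnd ℂ)) = 0 := by
        rw [two_smul]; exact hY2
      rcases smul_eq_zero.mp h2 with h | h
      · exact absurd h two_ne_zero
      · exact h
    have h6 : (Y : Matrix (Fin 4) (Fin 4) ℂ).map (starRingEnd ℂ) = 0 := by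
      calc (Y : Matrix (Fin 4) (Fin 4) ℂ).map (starRingEnd ℂ)
          = (H22 * H22) * (Y : Matrix (Fin 4) (Fin 4) ℂ).map (starRingEnd ℂ) := by
            rw [hH, one_mul]
      _ = H22 * (H22 * (Y : Matrix (Fin 4) (Fin 4) ℂ).map (starRingEnd ℂ)) := by
            rw [mul_assoc]
      _ = 0 := by rw [h5, mul_zero]
    have hY0 : (Y : Matrix (Fin 4) (Fin 4) ℂ) = 0 := by
      ext i j
      have := congrFun (congrFun h6 i) j
      rw [Matrix.map_apply, Matrix.zero_apply] at this
      simpa using (starRingEnd ℂ).injective (by simpa using this)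
    have hX0 : (X : Matrix (Fin 4) (Fin 4) ℂ) = 0 := by
      rw [hXY, hY0, smul_zero, neg_zero]
    have : X = 0 := Subtype.ext hX0
    have hY0' : Y = 0 := Subtype.ext hY0
    rw [this, hY0']
    rfl
  have hfin := LinearMap.finrank_le_finrank_of_injective hinj
  rw [Module.finrank_prod] at hfin
  have hcard : Module.finrank ℝ ({p : Fin 4 × Fin 4 // p.1 ≤ p.2} → ℂ) = 20 := by
    rw [Module.finrank_pi_fintype]
    simp only [Complex.finrank_real_complex, Finset.sum_const, smul_eq_mul]
    rw [show (Finset.univ : Finset {p : Fin 4 × Fin 4 // p.1 ≤ p.2}).card = 10 from by decide]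
  rw [hcard] at hfin
  omega
end

section
/- Let G := {A ∈ M₄(ℂ) : Aᵀ B₀ A = B₀ and Aᵀ H Ā = H}. Then for every real number r ≠ 0, G acts transitively on the pseudosphere {z ∈ ℂ⁴ : ⟨z,z⟩ = r}; that is, for all z, w ∈ ℂ⁴ with ⟨z,z⟩ = ⟨w,w⟩ = r there exists A ∈ G with A z = w. (This is the paper's claim that Sp₄(B,ℂ) ∩ SU(2,2) acts transitively on pseudospheres in ℂ⁴.) -/
/-!
Write `ω(x, y) = xᵀ B₀ y` and `K z = C₀ z̄`. Since `B₀ C₀ = H22`, the Hermitian form is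
`⟨z, w⟩ = ω(z, K w)`, so a matrix preserving `ω` preserves `⟨·,·⟩` as soon as it commutes with the
antilinear involution `K`. On the fixed points of `K` the form `ω` is `i` times a real symplectic
form, and the group contains the matrix carrying any real symplectic frame to any other.

If `⟨z, z⟩ = r ≠ 0`, then `u = (z + Kz)/2` and `v = -i(z - Kz)/r` are fixed by `K`, `ω(u, v) = i`
and `z = u + (ir/2) v`. Symplectic Gram–Schmidt on the fixed points extends `(u, v)` to a real
frame: the `ω`-projection onto the complement of `span(u, v)` is nonzero on some fixed `x`, and
`m = proj x` gets a partner from `ω(m, B₀ m̄) = -|m|²`. Matching the frames built from `z` and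
from `w` gives `A` with `A z = w`.
-/

open Matrix Complex ComplexConjugate

/-- The matrix B₀ = [[0, E₂], [−E₂, 0]]. -/
def B0 : Matrix (Fin 4) (Fin 4) ℂ :=
  !![0, 0, 1, 0; 0, 0, 0, 1; -1, 0, 0, 0; 0, -1, 0, 0]

def C0 : Matrix (Fin 4) (Fin 4) ℂ :=
  !![0, -1, 0, 0; -1, 0, 0, 0; 0, 0, 0, 1; 0, 0, 1, 0]

def frameGram : Matrix (Fin 4) (Fin 4) ℂ :=
  !![0, 0, 0, I; 0, 0, I, 0; 0, -I, 0, 0; -I, 0, 0, 0]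

lemma B0_mul_C0 : B0 * C0 = H22 := by
  ext i j; fin_cases i <;> fin_cases j <;> simp [B0, C0, H22, mul_apply, Fin.sum_univ_four]

lemma C0_mul_C0 : C0 * C0 = 1 := by
  ext i j; fin_cases i <;> fin_cases j <;> simp [C0, mul_apply, Fin.sum_univ_four]

lemma B0_mul_B0 : B0 * B0 = -1 := by
  ext i j; fin_cases i <;> fin_cases j <;> simp [B0, mul_apply, Fin.sum_univ_four]

lemma C0_mul_B0_mul_C0 : C0 * B0 * C0 = -B0 := by
  ext i j; fin_cases i <;> fin_cases j <;> simp [B0, C0, mul_apply, Fin.sum_univ_four]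

lemma transpose_B0 : B0ᵀ = -B0 := by
  ext i j; fin_cases i <;> fin_cases j <;> simp [B0]

lemma conjTranspose_B0 : B0ᴴ = -B0 := by
  ext i j; fin_cases i <;> fin_cases j <;> simp [B0]

lemma transpose_C0 : C0ᵀ = C0 := by
  ext i j; fin_cases i <;> fin_cases j <;> simp [C0]

lemma conjTranspose_C0 : C0ᴴ = C0 := by
  ext i j; fin_cases i <;> fin_cases j <;> simp [C0]

lemma frameGram_mul_frameGram : frameGram * frameGram = 1 := by
  ext i j; fin_cases i <;> fin_cases j <;> simp [frameGram, mul_apply, Fin.sum_univ_four]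

def sympForm : LinearMap.BilinForm ℂ (Fin 4 → ℂ) := toBilin' B0

lemma sympForm_apply (x y : Fin 4 → ℂ) : sympForm x y = x ⬝ᵥ B0 *ᵥ y :=
  toBilin'_apply' _ _ _

lemma sympForm_swap (x y : Fin 4 → ℂ) : sympForm y x = -sympForm x y := by
  rw [sympForm_apply, sympForm_apply, dotProduct_mulVec, ← mulVec_transpose, transpose_B0,
    neg_mulVec, neg_dotProduct, dotProduct_comm]

lemma sympForm_self (x : Fin 4 → ℂ) : sympForm x x = 0 := by
  linear_combination sympForm_swap x x / 2

lemma sympForm_B0_mulVec_star (x : Fin 4 → ℂ) :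
    sympForm x (B0 *ᵥ star x) = -(star x ⬝ᵥ x) := by
  rw [sympForm_apply, mulVec_mulVec, B0_mul_B0, neg_mulVec, one_mulVec, dotProduct_neg,
    dotProduct_comm]

def realStruct : (Fin 4 → ℂ) →ₗ⋆[ℂ] (Fin 4 → ℂ) :=
  C0.mulVecLin.comp (starLinearEquiv ℂ).toLinearMap

lemma realStruct_apply (z : Fin 4 → ℂ) : realStruct z = C0 *ᵥ star z := rfl

lemma star_realStruct (z : Fin 4 → ℂ) : star (realStruct z) = C0 *ᵥ z := by
  rw [realStruct_apply, star_mulVec, conjTranspose_C0, star_star, ← mulVec_transpose,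
    transpose_C0]

lemma realStruct_realStruct (z : Fin 4 → ℂ) : realStruct (realStruct z) = z := by
  rw [realStruct_apply (realStruct z), star_realStruct, mulVec_mulVec, C0_mul_C0, one_mulVec]

lemma star_eq_of_realStruct_eq {z : Fin 4 → ℂ} (hz : realStruct z = z) : star z = C0 *ᵥ z := by
  rw [← star_realStruct, hz]

lemma sympForm_realStruct_right (x y : Fin 4 → ℂ) :
    sympForm x (realStruct y) = x ⬝ᵥ H22 *ᵥ star y := by
  rw [sympForm_apply, realStruct_apply, mulVec_mulVec, B0_mul_C0]

lemma star_B0_mulVec (y : Fin 4 → ℂ) : star (B0 *ᵥ y) = B0 *ᵥ star y := by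
  rw [star_mulVec, conjTranspose_B0, vecMul_neg, ← mulVec_transpose, transpose_B0, neg_mulVec,
    neg_neg]

lemma sympForm_realStruct_realStruct (x y : Fin 4 → ℂ) :
    sympForm (realStruct x) (realStruct y) = -conj (sympForm x y) := by
  rw [sympForm_apply, sympForm_apply, realStruct_apply, realStruct_apply, ← vecMul_transpose,
    transpose_C0, ← dotProduct_mulVec, mulVec_mulVec, mulVec_mulVec, C0_mul_B0_mul_C0,
    neg_mulVec, dotProduct_neg, starRingEnd_apply, ← star_dotProduct_star, star_B0_mulVec,
    dotProduct_comm]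

lemma realStruct_B0_mulVec_star {x : Fin 4 → ℂ} (hx : realStruct x = x) :
    realStruct (B0 *ᵥ star x) = -(B0 *ᵥ star x) := by
  rw [realStruct_apply, star_B0_mulVec, star_star]
  conv_lhs => rw [← hx, realStruct_apply, mulVec_mulVec, mulVec_mulVec, C0_mul_B0_mul_C0,
    neg_mulVec]

lemma exists_fixed_sympForm_eq_I {x : Fin 4 → ℂ} (hx : realStruct x = x) (hx0 : x ≠ 0) :
    ∃ y, realStruct y = y ∧ sympForm x y = I := by
  set ν := star x ⬝ᵥ x with hν
  have hν0 : ν ≠ 0 := by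
    open scoped ComplexOrder in exact fun h => hx0 (dotProduct_star_self_eq_zero.mp h)
  have hν_real : conj ν = ν := by
    rw [starRingEnd_apply, ← star_dotProduct_star, star_star]
  refine ⟨(-I / ν) • B0 *ᵥ star x, ?_, ?_⟩
  · rw [map_smulₛₗ, realStruct_B0_mulVec_star hx, map_div₀, hν_real, map_neg, conj_I, smul_neg,
      ← neg_smul, neg_div, neg_neg]
  · rw [map_smul, sympForm_B0_mulVec_star, ← hν, smul_eq_mul]
    field_simp

def symplProj (u v : Fin 4 → ℂ) : Matrix (Fin 4) (Fin 4) ℂ :=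
  1 + I • vecMulVec u (B0 *ᵥ v) - I • vecMulVec v (B0 *ᵥ u)

lemma symplProj_mulVec (u v x : Fin 4 → ℂ) :
    symplProj u v *ᵥ x = x + (I * sympForm x v) • u - (I * sympForm x u) • v := by
  simp only [symplProj, sub_mulVec, add_mulVec, one_mulVec, smul_mulVec, vecMulVec_mulVec,
    sympForm_apply, op_smul_eq_smul, smul_smul, dotProduct_comm (B0 *ᵥ _)]

section symplProj

variable {u v : Fin 4 → ℂ}

lemma trace_symplProj (huv : sympForm u v = I) : trace (symplProj u v) = 2 := by
  have hvu : sympForm v u = -I := by rw [sympForm_swap, huv]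
  rw [sympForm_apply] at huv hvu
  simp only [symplProj, trace_sub, trace_add, trace_one, trace_smul, trace_vecMulVec, huv, hvu,
    Fintype.card_fin, smul_eq_mul]
  linear_combination (2 : ℂ) * I_mul_I

lemma sympForm_symplProj_left (huv : sympForm u v = I) (x : Fin 4 → ℂ) :
    sympForm (symplProj u v *ᵥ x) u = 0 ∧ sympForm (symplProj u v *ᵥ x) v = 0 := by
  have hvu : sympForm v u = -I := by rw [sympForm_swap, huv]
  simp only [symplProj_mulVec, map_add, map_sub, map_smul, LinearMap.add_apply,
    LinearMap.sub_apply, LinearMap.smul_apply, sympForm_self, huv, hvu, smul_eq_mul]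
  constructor <;> linear_combination (sympForm x _) * I_mul_I

lemma sympForm_symplProj_symplProj (huv : sympForm u v = I) (x y : Fin 4 → ℂ) :
    sympForm (symplProj u v *ᵥ x) (symplProj u v *ᵥ y) = sympForm (symplProj u v *ᵥ x) y := by
  obtain ⟨hu, hv⟩ := sympForm_symplProj_left huv x
  conv_lhs => rw [symplProj_mulVec u v y]
  simp only [map_add, map_sub, map_smul, hu, hv, smul_zero, add_zero, sub_zero]

lemma realStruct_symplProj (hu : realStruct u = u) (hv : realStruct v = v) (x : Fin 4 → ℂ) :
    realStruct (symplProj u v *ᵥ x) = symplProj u v *ᵥ realStruct x := by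
  have hconj (y : Fin 4 → ℂ) (hy : realStruct y = y) :
      conj (I * sympForm x y) = I * sympForm (realStruct x) y := by
    conv_rhs => rw [← hy, sympForm_realStruct_realStruct]
    rw [map_mul, conj_I]
    ring
  rw [symplProj_mulVec, symplProj_mulVec, map_sub, map_add, map_smulₛₗ, map_smulₛₗ, hconj u hu,
    hconj v hv, hu, hv]

-- `symplProj u v` has trace 2, so it is nonzero; being ℂ-linear, it cannot vanish on the fixed
-- points of `realStruct`, which span ℂ⁴.
lemma exists_fixed_symplProj_mulVec_ne_zero (huv : sympForm u v = I) :
    ∃ x, realStruct x = x ∧ symplProj u v *ᵥ x ≠ 0 := by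
  by_contra! h
  have hzero (x : Fin 4 → ℂ) : symplProj u v *ᵥ x = 0 := by
    have hre : realStruct (x + realStruct x) = x + realStruct x := by
      rw [map_add, realStruct_realStruct, add_comm]
    have him : realStruct (I • (x - realStruct x)) = I • (x - realStruct x) := by
      rw [map_smulₛₗ, map_sub, realStruct_realStruct, conj_I, neg_smul, ← smul_neg, neg_sub]
    have hx : x = (1 / 2 : ℂ) • (x + realStruct x) + (-I / 2) • (I • (x - realStruct x)) := by
      rw [smul_smul]
      ext i
      simp only [Pi.add_apply, Pi.smul_apply, Pi.sub_apply, smul_eq_mul]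
      linear_combination ((x i - realStruct x i) / 2) * I_mul_I
    rw [hx, mulVec_add, mulVec_smul, mulVec_smul, h _ hre, h _ him, smul_zero, smul_zero, add_zero]
  have hP : symplProj u v = 0 := ext_of_mulVec_single fun i => by rw [hzero, zero_mulVec]
  have := trace_symplProj huv
  rw [hP, trace_zero] at this
  norm_num at this

end symplProj

lemma exists_fixed_orthogonal_pair {u v : Fin 4 → ℂ} (hu : realStruct u = u)
    (hv : realStruct v = v) (huv : sympForm u v = I) :
    ∃ m₁ m₂, realStruct m₁ = m₁ ∧ realStruct m₂ = m₂ ∧ sympForm m₁ m₂ = I ∧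
      sympForm m₁ u = 0 ∧ sympForm m₁ v = 0 ∧ sympForm m₂ u = 0 ∧ sympForm m₂ v = 0 := by
  obtain ⟨x, hx, hx0⟩ := exists_fixed_symplProj_mulVec_ne_zero huv
  have hm₁ : realStruct (symplProj u v *ᵥ x) = symplProj u v *ᵥ x := by
    rw [realStruct_symplProj hu hv, hx]
  obtain ⟨y, hy, hxy⟩ := exists_fixed_sympForm_eq_I hm₁ hx0
  refine ⟨symplProj u v *ᵥ x, symplProj u v *ᵥ y, hm₁, by rw [realStruct_symplProj hu hv, hy],
    by rw [sympForm_symplProj_symplProj huv, hxy], ?_⟩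
  exact ⟨(sympForm_symplProj_left huv x).1, (sympForm_symplProj_left huv x).2,
    (sympForm_symplProj_left huv y).1, (sympForm_symplProj_left huv y).2⟩

def IsRealSymplecticFrame (F : Matrix (Fin 4) (Fin 4) ℂ) : Prop :=
  Fᵀ * B0 * F = frameGram ∧ F.map conj = C0 * F

lemma isRealSymplecticFrame_of_cols (g : Fin 4 → Fin 4 → ℂ) (hg : ∀ j, realStruct (g j) = g j)
    (hgram : ∀ i j, sympForm (g i) (g j) = frameGram i j) :
    IsRealSymplecticFrame (of g)ᵀ := by
  constructor
  · ext i j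
    rw [transpose_transpose, mul_mul_apply, transpose_transpose, ← hgram, sympForm_apply]
    rfl
  · ext i j
    have := congrFun (star_eq_of_realStruct_eq (hg j)) i
    simpa [mul_apply, mulVec, dotProduct] using this

lemma exists_frame_of_fixed_pair {u v : Fin 4 → ℂ} (hu : realStruct u = u)
    (hv : realStruct v = v) (huv : sympForm u v = I) :
    ∃ F, IsRealSymplecticFrame F ∧ ∀ a b : ℂ, F *ᵥ ![a, 0, 0, b] = a • u + b • v := by
  obtain ⟨m₁, m₂, hm₁, hm₂, hm₁₂, hm₁u, hm₁v, hm₂u, hm₂v⟩ :=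
    exists_fixed_orthogonal_pair hu hv huv
  refine ⟨(of ![u, m₁, m₂, v])ᵀ, isRealSymplecticFrame_of_cols _ ?_ ?_, fun a b => ?_⟩
  · intro j
    fin_cases j <;> assumption
  · intro i j
    fin_cases i <;> fin_cases j <;>
      simp [frameGram, sympForm_self, sympForm_swap m₁ u, sympForm_swap m₂ u, sympForm_swap u v,
        sympForm_swap m₁ m₂, sympForm_swap m₁ v, sympForm_swap m₂ v, huv, hm₁₂, hm₁u, hm₁v, hm₂u,
        hm₂v]
  · rw [mulVec_transpose, vecMul_eq_sum, Fin.sum_univ_four]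
    simp only [Matrix.cons_val, zero_smul, add_zero]
    rfl

lemma exists_frame_mulVec_eq {r : ℝ} (hr : r ≠ 0) {z : Fin 4 → ℂ}
    (hz : z ⬝ᵥ H22 *ᵥ star z = r) :
    ∃ F, IsRealSymplecticFrame F ∧ F *ᵥ ![1, 0, 0, I * r / 2] = z := by
  have hrC : (r : ℂ) ≠ 0 := ofReal_ne_zero.mpr hr
  have hzz : sympForm z (realStruct z) = r := by rw [sympForm_realStruct_right, hz]
  set u := (1 / 2 : ℂ) • (z + realStruct z)
  set v := (-I / r) • (z - realStruct z)
  have hu : realStruct u = u := by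
    rw [map_smulₛₗ, map_add, realStruct_realStruct, add_comm, map_div₀, map_one, map_ofNat]
  have hv : realStruct v = v := by
    rw [map_smulₛₗ, map_sub, realStruct_realStruct, map_div₀, map_neg, conj_I, conj_ofReal,
      ← neg_sub, smul_neg, ← neg_smul, neg_div, neg_neg]
  have huv : sympForm u v = I := by
    simp only [u, v, map_smul, map_add, map_sub, LinearMap.smul_apply, LinearMap.add_apply,
      sympForm_self, hzz, sympForm_swap z (realStruct z), smul_eq_mul]
    field_simp
    ring
  obtain ⟨F, hF, hFuv⟩ := exists_frame_of_fixed_pair hu hv huv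
  refine ⟨F, hF, ?_⟩
  have hcoeff : I * r / 2 * (-I / r) = 1 / 2 := by
    field_simp
    linear_combination -I_mul_I
  rw [hFuv, one_smul, smul_smul, hcoeff]
  ext i
  simp only [u, Pi.add_apply, Pi.smul_apply, Pi.sub_apply, smul_eq_mul]
  ring

lemma transpose_mul_H22_mul_map_conj {A : Matrix (Fin 4) (Fin 4) ℂ} (hA : Aᵀ * B0 * A = B0)
    (hAc : A.map conj = C0 * A * C0) : Aᵀ * H22 * A.map conj = H22 := by
  rw [hAc, ← B0_mul_C0]
  calc Aᵀ * (B0 * C0) * (C0 * A * C0) = Aᵀ * B0 * (C0 * C0) * A * C0 := by noncomm_ring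
    _ = B0 * C0 := by rw [C0_mul_C0, mul_one, hA]

lemma exists_mul_eq_of_frames {F F' : Matrix (Fin 4) (Fin 4) ℂ} (hF : IsRealSymplecticFrame F)
    (hF' : IsRealSymplecticFrame F') :
    ∃ A, Aᵀ * B0 * A = B0 ∧ Aᵀ * H22 * A.map conj = H22 ∧ A * F = F' := by
  obtain ⟨hFB, hFc⟩ := hF
  obtain ⟨hF'B, hF'c⟩ := hF'
  obtain ⟨L, hLF⟩ : ∃ L, L * F = 1 := ⟨frameGram * Fᵀ * B0, by
    rw [Matrix.mul_assoc, Matrix.mul_assoc, ← Matrix.mul_assoc Fᵀ, hFB, frameGram_mul_frameGram]⟩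
  have hFL : F * L = 1 := mul_eq_one_comm.mp hLF
  have hAF : F' * L * F = F' := by rw [Matrix.mul_assoc, hLF, Matrix.mul_one]
  have hAB : (F' * L)ᵀ * B0 * (F' * L) = B0 := calc
    (F' * L)ᵀ * B0 * (F' * L) = Lᵀ * (F'ᵀ * B0 * F') * L := by
      simp only [transpose_mul, Matrix.mul_assoc]
    _ = (F * L)ᵀ * B0 * (F * L) := by
      rw [hF'B, ← hFB, transpose_mul]; simp only [Matrix.mul_assoc]
    _ = B0 := by rw [hFL, transpose_one, Matrix.one_mul, Matrix.mul_one]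
  have hAc : (F' * L).map conj = C0 * (F' * L) * C0 := calc
    (F' * L).map conj = (F' * L).map conj * (C0 * (F * L) * C0) := by
      rw [hFL, Matrix.mul_one, C0_mul_C0, Matrix.mul_one]
    _ = (F' * L * F).map conj * L * C0 := by
      rw [Matrix.map_mul (L := F' * L), hFc]; simp only [Matrix.mul_assoc]
    _ = C0 * (F' * L) * C0 := by rw [hAF, hF'c]; simp only [Matrix.mul_assoc]
  exact ⟨F' * L, hAB, transpose_mul_H22_mul_map_conj hAB hAc, hAF⟩

/-- The group G = Sp₄(B₀,ℂ) ∩ SU(2,2) acts transitively on every pseudosphere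
{z ∈ ℂ⁴ : ⟨z,z⟩ = r}, r ≠ 0. -/
theorem stmt8 (r : ℝ) (hr : r ≠ 0) (z w : Fin 4 → ℂ)
    (hz : dotProduct z (H22.mulVec (star z)) = (r : ℂ))
    (hw : dotProduct w (H22.mulVec (star w)) = (r : ℂ)) :
    ∃ A : Matrix (Fin 4) (Fin 4) ℂ,
      A.transpose * B0 * A = B0 ∧
      A.transpose * H22 * A.map (starRingEnd ℂ) = H22 ∧
      A.mulVec z = w := by
  obtain ⟨F, hF, hFz⟩ := exists_frame_mulVec_eq hr hz
  obtain ⟨F', hF', hF'w⟩ := exists_frame_mulVec_eq hr hw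
  obtain ⟨A, hAB, hAH, hAF⟩ := exists_mul_eq_of_frames hF hF'
  refine ⟨A, hAB, hAH, ?_⟩
  rw [← hFz, mulVec_mulVec, hAF, hF'w]
end

section
/- Let P : ℂ² → ℂ be a polynomial function of z₁, zₙ, z̄₁, z̄ₙ (i.e., a finite ℂ-linear combination of monomials z₁ᵃ zₙᵇ z̄₁ᶜ z̄ₙᵈ) such that P(μ z₁ + c zₙ, μ zₙ) = P(z₁, zₙ) for all (z₁, zₙ) ∈ ℂ² and all μ, c ∈ ℂ with |μ| = 1 and Re(c μ̄) = 0. Then there exists a function q : ℝ × ℝ → ℂ such that P(z₁, zₙ) = q(Re(z₁ z̄ₙ), |zₙ|²) for all (z₁, zₙ) ∈ ℂ². (In the paper, this describes the invariants of the subgroup I of S consisting of matrices with |μ| = 1, x = 0, A = E_{n−2}.) -/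
/-!
For `zₙ ≠ 0` the group acts transitively on each level set of `(Re (z₁ z̄ₙ), |zₙ|²)`: a rotation
moves `zₙ` to `|zₙ|`, after which an imaginary shear moves `z₁` to the real number
`Re (z₁ z̄ₙ) / |zₙ|`. On `zₙ = 0` the orbits are only circles, but a polynomial is continuous, so
its value there is the limit of values on nearby orbits, which forces it to be constant.
-/

open Complex ComplexConjugate

/-- Invariance under the group `I` of the paper, acting by `(z₁, zₙ) ↦ (μ z₁ + c zₙ, μ zₙ)`. -/
def IsInvariantUnderI (P : ℂ → ℂ → ℂ) : Prop :=
  ∀ μ c : ℂ, ‖μ‖ = 1 → (c * conj μ).re = 0 → ∀ z1 zn : ℂ, P (μ * z1 + c * zn) (μ * zn) = P z1 zn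

namespace IsInvariantUnderI

variable {P : ℂ → ℂ → ℂ}

theorem apply_mul_mul (hP : IsInvariantUnderI P) {μ : ℂ} (hμ : ‖μ‖ = 1) (z1 zn : ℂ) :
    P (μ * z1) (μ * zn) = P z1 zn := by
  simpa using hP μ 0 hμ (by simp) z1 zn

theorem apply_add_mul_I_mul (hP : IsInvariantUnderI P) (y : ℝ) (z1 zn : ℂ) :
    P (z1 + y * I * zn) zn = P z1 zn := by
  simpa using hP 1 (y * I) (by simp) (by simp) z1 zn

theorem apply_ofReal_eq_apply_re (hP : IsInvariantUnderI P) (w : ℂ) {r : ℝ} (hr : r ≠ 0) :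
    P w r = P (w.re : ℝ) r := by
  have hw : w = (w.re : ℝ) + (w.im / r : ℝ) * I * r := by
    apply Complex.ext <;> simp [hr]
  nth_rw 1 [hw]
  exact hP.apply_add_mul_I_mul _ _ _

theorem apply_eq_apply_normalForm (hP : IsInvariantUnderI P) (z1 : ℂ) {zn : ℂ} (hzn : zn ≠ 0) :
    P z1 zn = P ((z1 * conj zn).re / ‖zn‖ : ℝ) (‖zn‖ : ℝ) := by
  set μ : ℂ := conj zn / ‖zn‖
  have hμ : ‖μ‖ = 1 := by simp [μ, div_self (norm_ne_zero_iff.mpr hzn)]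
  have hμzn : μ * zn = ‖zn‖ := by
    rw [div_mul_eq_mul_div, Complex.conj_mul']
    field_simp
  rw [← hP.apply_mul_mul hμ z1 zn, hμzn, hP.apply_ofReal_eq_apply_re _ (norm_ne_zero_iff.mpr hzn)]
  congr 3
  rw [show μ * z1 = z1 * conj zn / ‖zn‖ by ring, Complex.div_ofReal_re]

/-- Continuity in `zₙ` carries `apply_ofReal_eq_apply_re` to `zₙ = 0`; a rotation by `I` then
moves the real `z₁` onto the imaginary axis, where its real part is `0`. -/
theorem apply_zero_right (hP : IsInvariantUnderI P) (hcont : Continuous (Function.uncurry P))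
    (z : ℂ) : P z 0 = P 0 0 := by
  have hre (w : ℂ) : P w 0 = P (w.re : ℝ) 0 := by
    have hslice (v : ℂ) : Continuous fun ε : ℝ => P v ε :=
      hcont.comp (continuous_const.prodMk continuous_ofReal)
    have := Continuous.ext_on (dense_compl_singleton 0) (hslice w) (hslice _)
      fun ε hε => hP.apply_ofReal_eq_apply_re w hε
    simpa using congrFun this 0
  calc P z 0 = P (z.re : ℝ) 0 := hre z
    _ = P (I * (z.re : ℝ)) (I * 0) := (hP.apply_mul_mul (by simp) _ _).symm
    _ = P 0 0 := by simpa using hre (I * (z.re : ℝ))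

end IsInvariantUnderI

theorem continuous_uncurry_of_eq_sum_monomials {s : Finset (ℕ × ℕ × ℕ × ℕ)}
    {C : ℕ × ℕ × ℕ × ℕ → ℂ} {P : ℂ → ℂ → ℂ}
    (hP : ∀ z1 zn : ℂ, P z1 zn =
      ∑ k ∈ s, C k * z1 ^ k.1 * zn ^ k.2.1 * conj z1 ^ k.2.2.1 * conj zn ^ k.2.2.2) :
    Continuous (Function.uncurry P) := by
  have : Function.uncurry P = fun p : ℂ × ℂ =>
      ∑ k ∈ s, C k * p.1 ^ k.1 * p.2 ^ k.2.1 * conj p.1 ^ k.2.2.1 * conj p.2 ^ k.2.2.2 :=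
    funext fun p => hP p.1 p.2
  rw [this]
  fun_prop

/-- Any polynomial in z₁, zₙ, z̄₁, z̄ₙ invariant under the transformations
(z₁, zₙ) ↦ (μz₁ + czₙ, μzₙ), |μ| = 1, Re(cμ̄) = 0 (the group I of the paper)
is a function of Re(z₁z̄ₙ) and |zₙ|². -/
theorem stmt16 (s : Finset (ℕ × ℕ × ℕ × ℕ)) (C : ℕ × ℕ × ℕ × ℕ → ℂ)
    (P : ℂ → ℂ → ℂ)
    (hP : ∀ z1 zn : ℂ, P z1 zn =
      ∑ k ∈ s, C k * z1 ^ k.1 * zn ^ k.2.1 *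
        ((starRingEnd ℂ) z1) ^ k.2.2.1 * ((starRingEnd ℂ) zn) ^ k.2.2.2)
    (hinv : ∀ μ c : ℂ, ‖μ‖ = 1 → (c * (starRingEnd ℂ) μ).re = 0 →
      ∀ z1 zn : ℂ, P (μ * z1 + c * zn) (μ * zn) = P z1 zn) :
    ∃ q : ℝ × ℝ → ℂ, ∀ z1 zn : ℂ,
      P z1 zn = q ((z1 * (starRingEnd ℂ) zn).re, ‖zn‖ ^ 2) := by
  have hI : IsInvariantUnderI P := hinv
  refine ⟨fun p => if p.2 = 0 then P 0 0 else P (p.1 / √p.2 : ℝ) (√p.2 : ℝ), fun z1 zn => ?_⟩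
  rcases eq_or_ne zn 0 with rfl | hzn
  · simpa using hI.apply_zero_right (continuous_uncurry_of_eq_sum_monomials hP) z1
  · simpa [hzn] using hI.apply_eq_apply_normalForm z1 hzn
end

section
/- Let P : ℂ² → ℝ be a continuous function such that P(μ z₁ + c zₙ, μ zₙ) = P(z₁, zₙ) for all (z₁, zₙ) ∈ ℂ² and all μ, c ∈ ℂ with |μ| = 1 and Re(c μ̄) ≤ 0. Then there exists a function q : ℝ → ℝ such that P(z₁, zₙ) = q(|zₙ|²) for all (z₁, zₙ) ∈ ℂ². (In the paper, this is the step showing that the coefficient functions D_{rq}, which are invariant under the subgroups I and J of S, are functions of |zₙ|² alone.) -/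
/-! For `z₂ ≠ 0` the maps with `μ = 1` translate the first coordinate by any `c z₂` with
`Re c ≤ 0`; any two points `(z₁, z₂)`, `(z₁', z₂)` are carried to a common point this way,
so `P(z₁, z₂) = P(0, z₂)`, and the rotation `μ = |z₂| / z₂` gives `P(0, z₂) = P(0, |z₂|)`.
Continuity extends `P z = P(0, |z₂|)` across the nowhere dense set `z₂ = 0`. -/

theorem Complex.apply_eq_of_add_re_nonpos_invariant {α : Type*} (f : ℂ → α)
    (hf : ∀ w c : ℂ, c.re ≤ 0 → f (w + c) = f w) (w w' : ℂ) : f w = f w' := by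
  set p : ℂ := ((min w.re w'.re : ℝ) : ℂ)
  have reach : ∀ v : ℂ, min w.re w'.re ≤ v.re → f v = f p := fun v hv => by
    rw [← hf v (p - v) (by simpa [p] using hv), add_sub_cancel]
  rw [reach w (min_le_left _ _), reach w' (min_le_right _ _)]

section Invariance

variable {α : Type*} (P : ℂ × ℂ → α)

theorem apply_eq_apply_zero_fst
    (htrans : ∀ c : ℂ, c.re ≤ 0 → ∀ z : ℂ × ℂ, P (z.1 + c * z.2, z.2) = P z)
    (z₁ z₂ : ℂ) (hz₂ : z₂ ≠ 0) : P (z₁, z₂) = P (0, z₂) := by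
  have h := Complex.apply_eq_of_add_re_nonpos_invariant (fun w => P (w * z₂, z₂))
    (fun w c hc => by simpa [add_mul] using htrans c hc (w * z₂, z₂)) (z₁ / z₂) 0
  simpa [div_mul_cancel₀ z₁ hz₂] using h

theorem apply_zero_eq_apply_zero_norm
    (hrot : ∀ μ : ℂ, ‖μ‖ = 1 → ∀ z : ℂ × ℂ, P (μ * z.1, μ * z.2) = P z)
    (z₂ : ℂ) (hz₂ : z₂ ≠ 0) : P (0, z₂) = P (0, (‖z₂‖ : ℂ)) := by
  have hμ : ‖(‖z₂‖ : ℂ) / z₂‖ = 1 := by simp [hz₂]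
  simpa [div_mul_cancel₀ _ hz₂] using (hrot _ hμ (0, z₂)).symm

end Invariance

/-- A continuous function on ℂ² invariant under the transformations
(z₁, zₙ) ↦ (μz₁ + czₙ, μzₙ), |μ| = 1, Re(cμ̄) ≤ 0 (coming from the subgroups I
and J of the group S of the paper) is a function of |zₙ|² alone. -/
theorem stmt17 (P : ℂ × ℂ → ℝ) (hP : Continuous P)
    (hinv : ∀ μ c : ℂ, ‖μ‖ = 1 → (c * (starRingEnd ℂ) μ).re ≤ 0 →
      ∀ z : ℂ × ℂ, P (μ * z.1 + c * z.2, μ * z.2) = P z) :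
    ∃ q : ℝ → ℝ, ∀ z : ℂ × ℂ, P z = q (‖z.2‖ ^ 2) := by
  have htrans : ∀ c : ℂ, c.re ≤ 0 → ∀ z : ℂ × ℂ, P (z.1 + c * z.2, z.2) = P z :=
    fun c hc z => by simpa using hinv 1 c (by simp) (by simpa using hc) z
  have hrot : ∀ μ : ℂ, ‖μ‖ = 1 → ∀ z : ℂ × ℂ, P (μ * z.1, μ * z.2) = P z :=
    fun μ hμ z => by simpa using hinv μ 0 hμ (by simp) z
  have hgeneric : ∀ z : ℂ × ℂ, z ∈ Prod.snd ⁻¹' {0}ᶜ → P z = P (0, (‖z.2‖ : ℂ)) :=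
    fun z hz => by
      rw [← apply_zero_eq_apply_zero_norm P hrot z.2 hz,
        ← apply_eq_apply_zero_fst P htrans z.1 z.2 hz]
  have hP_eq : P = fun z => P (0, (‖z.2‖ : ℂ)) :=
    Continuous.ext_on ((dense_compl_singleton 0).preimage isOpenMap_snd) hP (by fun_prop)
      hgeneric
  refine ⟨fun t => P (0, (√t : ℂ)), fun z => ?_⟩
  rw [congrFun hP_eq z]
  simp only [Real.sqrt_sq (norm_nonneg _)]
end

section
/- Let n ≥ max(2m,3) with m ≥ 1, let s ≥ −1/2 be a rational number, and let C : ℕ³ → ℝ be a finitely supported family such that C_{rpq} ≠ 0 implies p ≥ 1 and r + q − 1 = s·p. Define F : ℂⁿ × ℝ → ℝ by F(z,u) := Σ_{r,p,q} C_{rpq} u^r |zₙ|^{2p} ⟨z,z⟩^q. Then for every U ∈ S with parameter μ, setting λ := |μ|^{1/(s+1)}, one has F(λ U z, λ² u) = λ² F(z, u) for all (z,u) ∈ ℂⁿ × ℝ; consequently the map (z,w) ↦ (λ U z, λ² w) maps the hypersurface M := {(z,w) ∈ ℂⁿ × ℂ : Im w = ⟨z,z⟩ + F(z, Re w)} onto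 itself. (This is the verification in part (iii) of the paper's Theorem 2 that all maps (mapwithlambda2) are automorphisms of M.) -/
/-!
The map `z ↦ U z` preserves the Hermitian form: writing `z = (z₀, z', zₙ)`, one has
`⟨z, z⟩ = 2 Re (z₀ z̄ₙ) + ⟨z', z'⟩′`, the cross terms produced by the first row of `U` cancel
against those of the middle block, and the remaining coefficient of `|zₙ|²` is
`2 Re (c / μ) + ⟨x, x⟩′ = 0`. Since moreover `(U z)ₙ = zₙ / μ̄`, the monomial
`u ^ r |zₙ| ^ (2p) ⟨z, z⟩ ^ q` gets multiplied by `λ ^ (2 (r + p + q)) / |μ| ^ (2p)`, which is `λ²`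
precisely because `r + q - 1 = s p` and `λ ^ (s + 1) = |μ|`. So the defining equation of `M` is
multiplied by `λ²` on both sides.
-/

open Matrix

def vecMiddle {α : Type*} {n : ℕ} (v : Fin n → α) (k : Fin (n - 2)) : α := v ⟨k + 1, by omega⟩

theorem vecMiddle_star {α : Type*} [Star α] {n : ℕ} (v : Fin n → α) :
    vecMiddle (star v) = star (vecMiddle v) :=
  rfl

theorem Fin.sum_univ_eq_first_add_middle_add_last {β : Type*} [AddCommMonoid β] {n : ℕ}
    (hn : 2 ≤ n) (f : Fin n → β) :
    ∑ i, f i = f ⟨0, by omega⟩ + ∑ k, vecMiddle f k + f ⟨n - 1, by omega⟩ := by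
  obtain ⟨k, rfl⟩ : ∃ k, n = k + 2 := ⟨n - 2, by omega⟩
  rw [Fin.sum_univ_castSucc, Fin.sum_univ_succ]
  rfl

theorem dotProduct_eq_first_add_middle_add_last {R : Type*} [NonUnitalNonAssocSemiring R] {n : ℕ}
    (hn : 2 ≤ n) (u v : Fin n → R) :
    u ⬝ᵥ v = u ⟨0, by omega⟩ * v ⟨0, by omega⟩ + vecMiddle u ⬝ᵥ vecMiddle v
      + u ⟨n - 1, by omega⟩ * v ⟨n - 1, by omega⟩ :=
  Fin.sum_univ_eq_first_add_middle_add_last hn _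

theorem dotProduct_mulVec_comm {R ι : Type*} [CommRing R] [Fintype ι] {M : Matrix ι ι R}
    (hM : Mᵀ = M) (u v : ι → R) : u ⬝ᵥ M *ᵥ v = v ⬝ᵥ M *ᵥ u := by
  rw [dotProduct_mulVec, ← mulVec_transpose, hM, dotProduct_comm]

section Form

variable {R ι : Type*} [CommRing R] [StarRing R] [Fintype ι] {M : Matrix ι ι R}

theorem star_dotProduct_mulVec_star (hM : Mᴴ = M) (u v : ι → R) :
    star (u ⬝ᵥ M *ᵥ star v) = v ⬝ᵥ M *ᵥ star u := by
  conv_lhs => rw [← hM]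
  rw [← star_vecMul, dotProduct_star, star_star, dotProduct_mulVec]

theorem mulVec_dotProduct_mulVec_star_mulVec {A : Matrix ι ι R}
    (hA : Aᵀ * M * A.map (starRingEnd R) = M) (u v : ι → R) :
    A *ᵥ u ⬝ᵥ M *ᵥ star (A *ᵥ v) = u ⬝ᵥ M *ᵥ star v := by
  have hstar : star (A *ᵥ v) = A.map (starRingEnd R) *ᵥ star v := by
    rw [star_mulVec, ← vecMul_transpose]
    rfl
  rw [hstar, mulVec_mulVec, ← vecMul_transpose, ← dotProduct_mulVec, mulVec_mulVec,
    ← Matrix.mul_assoc, hA]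

end Form

theorem smul_dotProduct_mulVec_star_smul {ι : Type*} [Fintype ι] (M : Matrix ι ι ℂ) (r : ℝ)
    (z : ι → ℂ) :
    r • z ⬝ᵥ M *ᵥ star (r • z) = ((r ^ 2 : ℝ) : ℂ) * (z ⬝ᵥ M *ᵥ star z) := by
  rw [star_smul, star_trivial, mulVec_smul, dotProduct_smul, smul_dotProduct, smul_smul,
    Complex.real_smul, ← sq]

theorem Hmat_conjTranspose (n m : ℕ) : (Hmat n m)ᴴ = Hmat n m := by
  rw [conjTranspose, Hmat_transpose]
  ext i j
  simp only [map_apply, Hmat]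
  split_ifs <;> simp

section HmatBlocks

variable {n m : ℕ}

theorem Hmat_apply_first (hm : 1 ≤ m) (hn : 2 ≤ n) (j : Fin n) :
    Hmat n m ⟨0, by omega⟩ j = if j = ⟨n - 1, by omega⟩ then 1 else 0 := by
  simp only [Hmat, Fin.ext_iff]
  split_ifs <;> first | rfl | omega

theorem Hmat_apply_last (hm : 1 ≤ m) (hn : 2 ≤ n) (j : Fin n) :
    Hmat n m ⟨n - 1, by omega⟩ j = if j = ⟨0, by omega⟩ then 1 else 0 := by
  simp only [Hmat, Fin.ext_iff]
  split_ifs <;> first | rfl | omega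

theorem Hmat_apply_middle_first (k : Fin (n - 2)) :
    Hmat n m ⟨k + 1, by omega⟩ ⟨0, by have := k.2; omega⟩ = 0 := by
  simp only [Hmat, Fin.ext_iff]
  split_ifs <;> first | rfl | omega | simp_all

theorem Hmat_apply_middle_last (k : Fin (n - 2)) :
    Hmat n m ⟨k + 1, by omega⟩ ⟨n - 1, by have := k.2; omega⟩ = 0 := by
  simp only [Hmat, Fin.ext_iff]
  split_ifs <;> first | rfl | omega

theorem Hmat_apply_middle_middle (k l : Fin (n - 2)) :
    Hmat n m ⟨k + 1, by omega⟩ ⟨l + 1, by omega⟩ = Hmat (n - 2) (m - 1) k l := by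
  simp only [Hmat, Fin.ext_iff]
  split_ifs <;> first | rfl | omega

theorem Hmat_mulVec_first (hm : 1 ≤ m) (hn : 2 ≤ n) (v : Fin n → ℂ) :
    (Hmat n m *ᵥ v) ⟨0, by omega⟩ = v ⟨n - 1, by omega⟩ := by
  simp [mulVec, dotProduct, Hmat_apply_first hm hn]

theorem Hmat_mulVec_last (hm : 1 ≤ m) (hn : 2 ≤ n) (v : Fin n → ℂ) :
    (Hmat n m *ᵥ v) ⟨n - 1, by omega⟩ = v ⟨0, by omega⟩ := by
  simp [mulVec, dotProduct, Hmat_apply_last hm hn]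

theorem vecMiddle_Hmat_mulVec (hn : 2 ≤ n) (v : Fin n → ℂ) :
    vecMiddle (Hmat n m *ᵥ v) = Hmat (n - 2) (m - 1) *ᵥ vecMiddle v := by
  ext k
  rw [vecMiddle, mulVec, dotProduct_eq_first_add_middle_add_last hn]
  simp only [Hmat_apply_middle_first, Hmat_apply_middle_last, zero_mul, zero_add,
    add_zero]
  congr 1
  ext l
  exact Hmat_apply_middle_middle k l

theorem dotProduct_Hmat_mulVec (hm : 1 ≤ m) (hn : 2 ≤ n) (u v : Fin n → ℂ) :
    u ⬝ᵥ Hmat n m *ᵥ v = u ⟨0, by omega⟩ * v ⟨n - 1, by omega⟩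
      + u ⟨n - 1, by omega⟩ * v ⟨0, by omega⟩
      + vecMiddle u ⬝ᵥ Hmat (n - 2) (m - 1) *ᵥ vecMiddle v := by
  rw [dotProduct_eq_first_add_middle_add_last hn, Hmat_mulVec_first hm hn,
    Hmat_mulVec_last hm hn, vecMiddle_Hmat_mulVec hn]
  ring

end HmatBlocks

section mkS

variable {n m : ℕ} (μ c : ℂ) (x : Fin (n - 2) → ℂ) (A : Matrix (Fin (n - 2)) (Fin (n - 2)) ℂ)

theorem mkS_mulVec_first (hn : 2 ≤ n) (z : Fin n → ℂ) :
    (mkS n m μ c x A *ᵥ z) ⟨0, by omega⟩ = μ * z ⟨0, by omega⟩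
      - μ * (star x ⬝ᵥ Hmat (n - 2) (m - 1) *ᵥ A *ᵥ vecMiddle z) + c * z ⟨n - 1, by omega⟩ := by
  have hlast : n - 1 ≠ 0 := by omega
  have hmiddle : ∀ k : Fin (n - 2), (k : ℕ) + 1 ≠ n - 1 := by omega
  rw [mulVec, dotProduct_eq_first_add_middle_add_last hn]
  simp only [mkS, ↓reduceDIte, dotProduct, vecMiddle, Nat.add_eq_zero_iff, one_ne_zero, and_false,
    hmiddle, add_tsub_cancel_right, Fin.eta, mul_assoc, Finset.mul_sum, neg_mul,
    Finset.sum_neg_distrib, Finset.sum_mul, hlast, Pi.star_apply, RCLike.star_def, mulVec,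
    sub_eq_add_neg, add_left_inj, add_right_inj, neg_inj]
  rw [Finset.sum_comm]
  exact Finset.sum_congr rfl fun _ _ => Finset.sum_comm

theorem vecMiddle_mkS_mulVec (hn : 2 ≤ n) (z : Fin n → ℂ) :
    vecMiddle (mkS n m μ c x A *ᵥ z) = A *ᵥ vecMiddle z + z ⟨n - 1, by omega⟩ • x := by
  have hlast : n - 1 ≠ 0 := by omega
  have hmiddle : ∀ k : Fin (n - 2), (k : ℕ) + 1 ≠ n - 1 := by omega
  ext k
  rw [vecMiddle, mulVec, dotProduct_eq_first_add_middle_add_last hn]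
  simp [mkS, vecMiddle, mulVec, dotProduct, hlast, hmiddle, mul_comm]

theorem mkS_mulVec_last (hn : 2 ≤ n) (z : Fin n → ℂ) :
    (mkS n m μ c x A *ᵥ z) ⟨n - 1, by omega⟩ = (starRingEnd ℂ μ)⁻¹ * z ⟨n - 1, by omega⟩ := by
  have hlast : 0 ≠ n - 1 := by omega
  have hmiddle : ∀ k : Fin (n - 2), (k : ℕ) + 1 ≠ n - 1 := by omega
  rw [mulVec, dotProduct_eq_first_add_middle_add_last hn]
  simp [mkS, vecMiddle, dotProduct, hlast, hlast.symm, hmiddle]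

theorem mkS_mulVec_form_eq_add (hm : 1 ≤ m) (hn : 2 ≤ n) (hμ : μ ≠ 0)
    (hA : Aᵀ * Hmat (n - 2) (m - 1) * A.map (starRingEnd ℂ) = Hmat (n - 2) (m - 1))
    (z : Fin n → ℂ) :
    mkS n m μ c x A *ᵥ z ⬝ᵥ Hmat n m *ᵥ star (mkS n m μ c x A *ᵥ z)
      = z ⬝ᵥ Hmat n m *ᵥ star z + z ⟨n - 1, by omega⟩ * starRingEnd ℂ (z ⟨n - 1, by omega⟩)
        * (c / μ + starRingEnd ℂ (c / μ) + x ⬝ᵥ Hmat (n - 2) (m - 1) *ᵥ star x) := by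
  set H' := Hmat (n - 2) (m - 1)
  set zN := z ⟨n - 1, by omega⟩
  set v := A *ᵥ vecMiddle z
  set T := star x ⬝ᵥ H' *ᵥ v
  have hv : v ⬝ᵥ H' *ᵥ star v = vecMiddle z ⬝ᵥ H' *ᵥ star (vecMiddle z) :=
    mulVec_dotProduct_mulVec_star_mulVec hA _ _
  have hvx : v ⬝ᵥ H' *ᵥ star x = T := dotProduct_mulVec_comm (Hmat_transpose _ _) _ _
  have hxv : x ⬝ᵥ H' *ᵥ star v = starRingEnd ℂ T := by
    rw [← star_dotProduct_mulVec_star (Hmat_conjTranspose _ _)]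
    exact congrArg star hvx
  have hmiddle : vecMiddle (mkS n m μ c x A *ᵥ z) ⬝ᵥ H' *ᵥ star (vecMiddle (mkS n m μ c x A *ᵥ z))
      = vecMiddle z ⬝ᵥ H' *ᵥ star (vecMiddle z) + starRingEnd ℂ zN * T + zN * starRingEnd ℂ T
        + zN * starRingEnd ℂ zN * (x ⬝ᵥ H' *ᵥ star x) := by
    rw [vecMiddle_mkS_mulVec μ c x A hn, star_add, star_smul, mulVec_add, mulVec_smul,
      dotProduct_add, add_dotProduct, add_dotProduct, smul_dotProduct, smul_dotProduct,
      dotProduct_smul, dotProduct_smul, hv, hvx, hxv]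
    simp only [smul_eq_mul, RCLike.star_def]
    ring
  rw [dotProduct_Hmat_mulVec hm hn, dotProduct_Hmat_mulVec hm hn, vecMiddle_star, vecMiddle_star,
    hmiddle]
  simp only [Pi.star_apply, RCLike.star_def]
  rw [mkS_mulVec_first μ c x A hn, mkS_mulVec_last μ c x A hn]
  have hμ' : starRingEnd ℂ μ ≠ 0 := by simpa using hμ
  simp only [map_mul, map_add, map_sub, map_div₀, map_inv₀, Complex.conj_conj]
  field_simp
  ring

theorem mkS_mulVec_form (hm : 1 ≤ m) (hn : 2 ≤ n) (hμ : μ ≠ 0)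
    (hA : Aᵀ * Hmat (n - 2) (m - 1) * A.map (starRingEnd ℂ) = Hmat (n - 2) (m - 1))
    (hc : 2 * (c / μ).re + (x ⬝ᵥ Hmat (n - 2) (m - 1) *ᵥ star x).re = 0) (z : Fin n → ℂ) :
    mkS n m μ c x A *ᵥ z ⬝ᵥ Hmat n m *ᵥ star (mkS n m μ c x A *ᵥ z) = z ⬝ᵥ Hmat n m *ᵥ star z := by
  have hx : (x ⬝ᵥ Hmat (n - 2) (m - 1) *ᵥ star x).im = 0 :=
    Complex.conj_eq_iff_im.mp (star_dotProduct_mulVec_star (Hmat_conjTranspose _ _) x x)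
  have hzero : c / μ + starRingEnd ℂ (c / μ) + x ⬝ᵥ Hmat (n - 2) (m - 1) *ᵥ star x = 0 := by
    apply Complex.ext <;> simp only [Complex.add_re, Complex.add_im, Complex.conj_re,
      Complex.conj_im, Complex.zero_re, Complex.zero_im] <;> linarith
  rw [mkS_mulVec_form_eq_add μ c x A hm hn hμ hA, hzero, mul_zero, add_zero]

end mkS

theorem rpow_one_div_add_one_pow {a s : ℝ} (ha : 0 < a) (hs : s + 1 ≠ 0) {r p q : ℕ}
    (h : (r : ℝ) + q - 1 = s * p) :
    (a ^ (1 / (s + 1))) ^ (r + p + q) = a ^ (1 / (s + 1)) * a ^ p := by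
  rw [← Real.rpow_natCast, ← Real.rpow_mul ha.le, ← Real.rpow_natCast a p, ← Real.rpow_add ha]
  congr 1
  field_simp
  push_cast
  linear_combination h

theorem sum_weighted_homogeneous {s : ℝ} (hs : s + 1 ≠ 0) (supp : Finset (ℕ × ℕ × ℕ))
    (C : ℕ × ℕ × ℕ → ℝ) (hC : ∀ r p q : ℕ, C (r, p, q) ≠ 0 → (r : ℝ) + q - 1 = s * p)
    {a : ℝ} (ha : 0 < a) (u t Q : ℝ) :
    ∑ k ∈ supp, C k * ((a ^ (1 / (s + 1))) ^ 2 * u) ^ k.1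
        * (a ^ (1 / (s + 1)) * t / a) ^ (2 * k.2.1) * ((a ^ (1 / (s + 1))) ^ 2 * Q) ^ k.2.2
      = (a ^ (1 / (s + 1))) ^ 2 * ∑ k ∈ supp, C k * u ^ k.1 * t ^ (2 * k.2.1) * Q ^ k.2.2 := by
  rw [Finset.mul_sum]
  refine Finset.sum_congr rfl fun ⟨r, p, q⟩ _ => ?_
  by_cases hCk : C (r, p, q) = 0
  · simp [hCk]
  have hpow := rpow_one_div_add_one_pow ha hs (hC r p q hCk)
  set lam := a ^ (1 / (s + 1))
  have hscale :
      (lam ^ 2) ^ r * (lam * t / a) ^ (2 * p) * (lam ^ 2) ^ q = lam ^ 2 * t ^ (2 * p) := by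
    calc _ = (lam ^ (r + p + q)) ^ 2 * t ^ (2 * p) / (a ^ p) ^ 2 := by ring
      _ = lam ^ 2 * t ^ (2 * p) := by
        rw [hpow]
        field_simp
  calc _ = C (r, p, q) * u ^ r * Q ^ q
          * ((lam ^ 2) ^ r * (lam * t / a) ^ (2 * p) * (lam ^ 2) ^ q) := by ring
    _ = _ := by rw [hscale]; ring

/-- Part (iii) of Theorem 2: for F(z,u) = Σ C_{rpq} u^r |zₙ|^{2p} ⟨z,z⟩^q with
(r+q−1)/p = s for all non-zero coefficients, every map
(z,w) ↦ (λUz, λ²w) with U ∈ S (parameter μ) and λ = |μ|^{1/(s+1)} satisfies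
F(λUz, λ²u) = λ²F(z,u) and maps M = {Im w = ⟨z,z⟩ + F(z, Re w)} onto itself. -/
theorem stmt18 {n m : ℕ} (hm : 1 ≤ m) (hn : 3 ≤ n)
    (s : ℚ) (hs : -(1 / 2) ≤ s)
    (supp : Finset (ℕ × ℕ × ℕ)) (C : ℕ × ℕ × ℕ → ℝ)
    (hC : ∀ r p q : ℕ, C (r, p, q) ≠ 0 → 1 ≤ p ∧ (r : ℚ) + q - 1 = s * p)
    (F : (Fin n → ℂ) → ℝ → ℝ)
    (hF : ∀ (z : Fin n → ℂ) (u : ℝ), F z u =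
      ∑ k ∈ supp, C k * u ^ k.1 * ‖z ⟨n - 1, by omega⟩‖ ^ (2 * k.2.1) *
        ((dotProduct z ((Hmat n m).mulVec (star z))).re) ^ k.2.2)
    (μ c : ℂ) (x : Fin (n - 2) → ℂ) (A : Matrix (Fin (n - 2)) (Fin (n - 2)) ℂ)
    (hμ : μ ≠ 0)
    (hA : A.transpose * Hmat (n - 2) (m - 1) * A.map (starRingEnd ℂ) = Hmat (n - 2) (m - 1))
    (hc : 2 * (c / μ).re + (dotProduct x ((Hmat (n - 2) (m - 1)).mulVec (star x))).re = 0) :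
    let U := mkS n m μ c x A
    let lam : ℝ := ‖μ‖ ^ (((1 / (s + 1) : ℚ) : ℝ))
    (∀ (z : Fin n → ℂ) (u : ℝ), F (lam • U.mulVec z) (lam ^ 2 * u) = lam ^ 2 * F z u) ∧
    (∀ (z : Fin n → ℂ) (w : ℂ),
      (w.im = (dotProduct z ((Hmat n m).mulVec (star z))).re + F z w.re) ↔
      ((lam ^ 2 • w).im =
        (dotProduct (lam • U.mulVec z)
          ((Hmat n m).mulVec (star (lam • U.mulVec z)))).re +
        F (lam • U.mulVec z) (lam ^ 2 • w).re)) := by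
  intro U lam
  have hμ' : 0 < ‖μ‖ := norm_pos_iff.mpr hμ
  have hs' : (s : ℝ) + 1 ≠ 0 := by exact_mod_cast (by linarith : (0 : ℚ) < s + 1).ne'
  have hlam : lam = ‖μ‖ ^ (1 / ((s : ℝ) + 1)) := by simp [lam]
  have hlam0 : 0 < lam := hlam ▸ Real.rpow_pos_of_pos hμ' _
  have hform (z : Fin n → ℂ) : (lam • U *ᵥ z ⬝ᵥ Hmat n m *ᵥ star (lam • U *ᵥ z)).re
      = lam ^ 2 * (z ⬝ᵥ Hmat n m *ᵥ star z).re := by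
    rw [smul_dotProduct_mulVec_star_smul, mkS_mulVec_form μ c x A hm (by omega) hμ hA hc,
      Complex.re_ofReal_mul]
  have hlast (z : Fin n → ℂ) : ‖(lam • U *ᵥ z) ⟨n - 1, by omega⟩‖
      = lam * ‖z ⟨n - 1, by omega⟩‖ / ‖μ‖ := by
    rw [Pi.smul_apply, mkS_mulVec_last μ c x A (by omega), norm_smul, norm_mul, norm_inv,
      Complex.norm_conj, Real.norm_of_nonneg hlam0.le]
    ring
  have hFhom (z : Fin n → ℂ) (u : ℝ) : F (lam • U *ᵥ z) (lam ^ 2 * u) = lam ^ 2 * F z u := by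
    rw [hF, hF, hform, hlast, hlam]
    exact sum_weighted_homogeneous hs' supp C (fun r p q h => by exact_mod_cast (hC r p q h).2)
      hμ' _ _ _
  refine ⟨hFhom, fun z w => ?_⟩
  rw [Complex.smul_im, Complex.smul_re, smul_eq_mul, smul_eq_mul, hform, hFhom, ← mul_add,
    mul_right_inj' (by positivity)]
end

section
/- Let n ≥ 2m with m ≥ 1, let λ, μ be positive real numbers with λ ≠ 1 and μ ≠ 1, and let U := diag(μ, 1, …, 1, 1/μ) ∈ Mₙ(ℂ) (so U ∈ U(H)). Let C : ℕ³ → ℝ be a family of coefficients such that the series F(z,u) := Σ_{r,p,q} C_{rpq} u^r |zₙ|^{2p} ⟨z,z⟩^q converges absolutely for all (z,u) in some neighborhood of the origin in ℂⁿ × ℝ, and suppose F(λ U z, λ² u) = λ² F(z, u) for all (z,u) in that neighborhood. Then for every (r,p,q) with C_{rpq} ≠ 0 one has λ^{r+p+q−1} = μ^p. (This is relation (rellammu) in the proof of the paper's Theorem 2; in particular, together with r + p + q − 1 ≥ 1 it forces p ≥ 1 and the ratio (r + q − 1)/p to take the same value for all non-zero coefficients.) -/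
/-!
Evaluate along the vectors z = (a, 0, …, 0, b) with a, b > 0: there |zₙ| = b and ⟨z,z⟩ = 2ab,
and λUz = (λμa, 0, …, 0, λb/μ) has the same shape. Writing ρ = λ^{r+p+q} / μ^p, the
homogeneity of F says that Σ C_{rpq} (ρ² − λ²) 2^q u^r a^q b^{2p+q} vanishes on a small cube
in the positive octant. As (r, p, q) ↦ (r, q, 2p + q) is injective, these are the coefficients
of a power series in (u, a, b), and they vanish by the one-variable identity theorem applied to
one variable at a time. Hence ρ² = λ² whenever C_{rpq} ≠ 0, and for λ, μ > 0 this is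
λ^{r+p+q-1} = μ^p.
-/

open Set Filter Topology Matrix

theorem eq_zero_of_tsum_mul_pow_eq_zero {a : ℕ → ℝ} {δ : ℝ} (hδ : 0 < δ)
    (hs : ∀ x ∈ Ioo 0 δ, Summable fun k => a k * x ^ k)
    (h0 : ∀ x ∈ Ioo 0 δ, ∑' k, a k * x ^ k = 0) : a = 0 := by
  set p := FormalMultilinearSeries.ofScalars ℝ a
  have hsum : p.sum = fun x => ∑' k, a k * x ^ k :=
    FormalMultilinearSeries.ofScalarsSum_eq_tsum a
  have hrad : 0 < p.radius := by
    let r : NNReal := ⟨δ / 2, by positivity⟩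
    have hr : (r : ℝ) ∈ Ioo 0 δ := ⟨half_pos hδ, half_lt_self hδ⟩
    refine lt_of_lt_of_le ?_ (p.le_radius_of_summable_norm (r := r) ?_)
    · exact_mod_cast hr.1
    · simpa [p, FormalMultilinearSeries.ofScalars_norm, abs_mul, abs_of_pos hr.1]
        using (hs _ hr).abs
  have hp : HasFPowerSeriesAt p.sum p 0 := (p.hasFPowerSeriesOnBall hrad).hasFPowerSeriesAt
  have hfreq : ∃ᶠ x in 𝓝[≠] (0 : ℝ), p.sum x = 0 := by
    refine (Eventually.frequently ?_).filter_mono (nhdsGT_le_nhdsNE 0)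
    filter_upwards [Ioo_mem_nhdsGT hδ] with x hx
    exact (congrFun hsum x).trans (h0 x hx)
  rw [← FormalMultilinearSeries.ofScalars_series_eq_zero ℝ, ← hp.locally_zero_iff]
  exact hp.analyticAt.frequently_zero_iff_eventually_zero.mp hfreq

theorem Summable.slice_of_mul_pow {ι : Type*} {d : ℕ × ι → ℝ} {x : ℝ} (hx : x ≠ 0)
    (hs : Summable fun k => d k * x ^ k.1) (r : ℕ) : Summable fun i => d (r, i) :=
  (summable_mul_right_iff (pow_ne_zero r hx)).mp (hs.prod_factor r)

theorem tsum_slice_eq_zero_of_tsum_mul_pow_eq_zero {ι : Type*} {d : ℕ × ι → ℝ} {δ : ℝ}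
    (hδ : 0 < δ) (hs : ∀ x ∈ Ioo 0 δ, Summable fun k => d k * x ^ k.1)
    (h0 : ∀ x ∈ Ioo 0 δ, ∑' k, d k * x ^ k.1 = 0) (r : ℕ) : ∑' i, d (r, i) = 0 := by
  have hrow : ∀ x : ℝ, ∀ r, (∑' i, d (r, i)) * x ^ r = ∑' i, d (r, i) * x ^ r :=
    fun _ _ => tsum_mul_right.symm
  refine congrFun (eq_zero_of_tsum_mul_pow_eq_zero (a := fun r => ∑' i, d (r, i)) hδ
    (fun x hx => ?_) (fun x hx => ?_)) r
  · simpa only [hrow] using (hs x hx).prod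
  · simpa only [hrow, ← (hs x hx).tsum_prod] using h0 x hx

-- The monomial is written `c k * z ^ q * y ^ p * x ^ r` so that slicing off `x`, then `y`,
-- matches `tsum_slice_eq_zero_of_tsum_mul_pow_eq_zero` without rearranging products.
theorem eq_zero_of_tsum_monomial_eq_zero {c : ℕ × ℕ × ℕ → ℝ} {δ : ℝ} (hδ : 0 < δ)
    (hs : ∀ x ∈ Ioo 0 δ, ∀ y ∈ Ioo 0 δ, ∀ z ∈ Ioo 0 δ,
      Summable fun k => c k * z ^ k.2.2 * y ^ k.2.1 * x ^ k.1)
    (h0 : ∀ x ∈ Ioo 0 δ, ∀ y ∈ Ioo 0 δ, ∀ z ∈ Ioo 0 δ,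
      ∑' k, c k * z ^ k.2.2 * y ^ k.2.1 * x ^ k.1 = 0) : c = 0 := by
  have hmid : δ / 2 ∈ Ioo 0 δ := ⟨half_pos hδ, half_lt_self hδ⟩
  have hs' : ∀ r, ∀ y ∈ Ioo 0 δ, ∀ z ∈ Ioo 0 δ,
      Summable fun pq : ℕ × ℕ => c (r, pq) * z ^ pq.2 * y ^ pq.1 := fun r y hy z hz =>
    (hs _ hmid y hy z hz).slice_of_mul_pow hmid.1.ne' r
  have h1 : ∀ r, ∀ y ∈ Ioo 0 δ, ∀ z ∈ Ioo 0 δ,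
      ∑' pq : ℕ × ℕ, c (r, pq) * z ^ pq.2 * y ^ pq.1 = 0 := fun r y hy z hz =>
    tsum_slice_eq_zero_of_tsum_mul_pow_eq_zero hδ (fun x hx => hs x hx y hy z hz)
      (fun x hx => h0 x hx y hy z hz) r
  have h2 : ∀ r p, ∀ z ∈ Ioo 0 δ, ∑' q, c (r, p, q) * z ^ q = 0 := fun r p z hz =>
    tsum_slice_eq_zero_of_tsum_mul_pow_eq_zero hδ (fun y hy => hs' r y hy z hz)
      (fun y hy => h1 r y hy z hz) p
  ext ⟨r, p, q⟩
  refine congrFun (eq_zero_of_tsum_mul_pow_eq_zero hδ (fun z hz => ?_) (h2 r p)) q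
  exact (hs' r _ hmid z hz).slice_of_mul_pow hmid.1.ne' p

theorem Function.Injective.eq_zero_of_tsum_monomial_eq_zero {ι : Type*} {c : ι → ℝ}
    {e : ι → ℕ × ℕ × ℕ} (he : Function.Injective e) {δ : ℝ} (hδ : 0 < δ)
    (hs : ∀ x ∈ Ioo 0 δ, ∀ y ∈ Ioo 0 δ, ∀ z ∈ Ioo 0 δ,
      Summable fun i => c i * z ^ (e i).2.2 * y ^ (e i).2.1 * x ^ (e i).1)
    (h0 : ∀ x ∈ Ioo 0 δ, ∀ y ∈ Ioo 0 δ, ∀ z ∈ Ioo 0 δ,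
      ∑' i, c i * z ^ (e i).2.2 * y ^ (e i).2.1 * x ^ (e i).1 = 0) : c = 0 := by
  set c' : ℕ × ℕ × ℕ → ℝ := Function.extend e c 0
  have hc' : ∀ i, c' (e i) = c i := he.extend_apply c 0
  have hout : ∀ k ∉ range e, c' k = 0 :=
    fun k hk => Function.extend_apply' c (0 : ℕ × ℕ × ℕ → ℝ) k hk
  have hc'0 : c' = 0 := by
    refine _root_.eq_zero_of_tsum_monomial_eq_zero hδ (fun x hx y hy z hz => ?_)
      (fun x hx y hy z hz => ?_)
    · refine (he.summable_iff (fun k hk => by simp [hout k hk])).mp ?_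
      simpa [Function.comp_def, hc'] using hs x hx y hy z hz
    · rw [← he.tsum_eq (fun k hk => by_contra fun hk' => hk (by simp [hout k hk']))]
      simpa [hc'] using h0 x hx y hy z hz
  funext i
  rw [← hc', hc'0, Pi.zero_apply, Pi.zero_apply]

def cornerVec (n : ℕ) (a b : ℝ) : Fin n → ℂ := fun i =>
  if i.1 = 0 then (a : ℂ) else if i.1 = n - 1 then (b : ℂ) else 0

theorem cornerVec_eq_single {n : ℕ} (hn : 2 ≤ n) (a b : ℝ) :
    cornerVec n a b = Pi.single ⟨0, by omega⟩ (a : ℂ) + Pi.single ⟨n - 1, by omega⟩ (b : ℂ) := by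
  funext i
  simp only [cornerVec, Pi.add_apply, Pi.single_apply, Fin.ext_iff]
  split_ifs <;> simp_all; omega

theorem norm_cornerVec_last {n : ℕ} (hn : 2 ≤ n) (a : ℝ) {b : ℝ} (hb : 0 ≤ b)
    (h : n - 1 < n) : ‖cornerVec n a b ⟨n - 1, h⟩‖ = b := by
  simp only [cornerVec]
  rw [if_neg (by omega), if_pos trivial, Complex.norm_real, Real.norm_of_nonneg hb]

theorem re_cornerVec_dotProduct_Hmat_mulVec {n m : ℕ} (hm : 1 ≤ m) (hnm : 2 * m ≤ n)
    (a b : ℝ) : (cornerVec n a b ⬝ᵥ (Hmat n m *ᵥ star (cornerVec n a b))).re = 2 * a * b := by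
  have hn : 2 ≤ n := by omega
  have hstar : star (cornerVec n a b) = cornerVec n a b := by
    funext i; simp only [cornerVec, Pi.star_apply]; split_ifs <;> simp
  rw [hstar, cornerVec_eq_single hn]
  simp only [mulVec_add, dotProduct_add, add_dotProduct, single_dotProduct, mulVec_single,
    Pi.smul_apply, col_apply, Hmat, Fin.mk.injEq, MulOpposite.smul_eq_mul_unop, MulOpposite.unop_op]
  split_ifs <;> try omega
  simp only [zero_mul, mul_zero, one_mul, zero_add, add_zero, Complex.add_re, Complex.mul_re,
    Complex.ofReal_re, Complex.ofReal_im, sub_zero]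
  ring

theorem smul_mulVec_cornerVec {n : ℕ} (lam mu a b : ℝ) :
    lam • (Matrix.diagonal (fun i : Fin n =>
      if i.1 = 0 then (mu : ℂ) else if i.1 = n - 1 then (mu : ℂ)⁻¹ else 1) *ᵥ cornerVec n a b)
      = cornerVec n (lam * mu * a) (lam * b / mu) := by
  funext i
  simp only [Pi.smul_apply, Matrix.mulVec_diagonal, cornerVec]
  split_ifs <;> simp only [Complex.real_smul, Complex.ofReal_mul, Complex.ofReal_div, mul_zero,
    smul_zero] <;> ring

theorem continuous_cornerVec (n : ℕ) : Continuous fun w : ℝ × ℝ => cornerVec n w.1 w.2 := by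
  refine continuous_pi fun i => ?_
  simp only [cornerVec]
  split_ifs <;> fun_prop

theorem eventually_cornerVec_mem {n : ℕ} {V : Set ((Fin n → ℂ) × ℝ)} (hV : V ∈ 𝓝 0) :
    ∀ᶠ w : ℝ × ℝ × ℝ in 𝓝 0, (cornerVec n w.2.1 w.2.2, w.1) ∈ V := by
  have hcont : Continuous fun w : ℝ × ℝ × ℝ => (cornerVec n w.2.1 w.2.2, w.1) :=
    ((continuous_cornerVec n).comp continuous_snd).prodMk continuous_fst
  have hzero : cornerVec n 0 0 = 0 := by funext i; simp [cornerVec]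
  exact hcont.tendsto' 0 0 (by simp [hzero]) hV

theorem exists_Ioo_cube_of_eventually {P : ℝ × ℝ × ℝ → Prop} (h : ∀ᶠ w in 𝓝 0, P w) :
    ∃ δ > 0, ∀ u ∈ Ioo 0 δ, ∀ a ∈ Ioo 0 δ, ∀ b ∈ Ioo 0 δ, P (u, a, b) := by
  obtain ⟨δ, hδ, hP⟩ := Metric.eventually_nhds_iff.mp h
  refine ⟨δ, hδ, fun u hu a ha b hb => hP ?_⟩
  simp only [Prod.dist_eq, Real.dist_eq, Prod.fst_zero, Prod.snd_zero, sub_zero,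
    abs_of_pos hu.1, abs_of_pos ha.1, abs_of_pos hb.1]
  exact max_lt hu.2 (max_lt ha.2 hb.2)

def cornerTerm (C : ℕ × ℕ × ℕ → ℝ) (u a b : ℝ) (k : ℕ × ℕ × ℕ) : ℝ :=
  C k * u ^ k.1 * b ^ (2 * k.2.1) * (2 * a * b) ^ k.2.2

theorem cornerTerm_scale (C : ℕ × ℕ × ℕ → ℝ) {mu : ℝ} (hmu : mu ≠ 0) (lam u a b : ℝ)
    (k : ℕ × ℕ × ℕ) :
    cornerTerm C (lam ^ 2 * u) (lam * mu * a) (lam * b / mu) k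
      = (lam ^ (k.1 + k.2.1 + k.2.2) / mu ^ k.2.1) ^ 2 * cornerTerm C u a b k := by
  simp only [cornerTerm, mul_pow, div_pow, ← pow_mul]
  field_simp
  ring

theorem cornerTerm_scale_sub (C : ℕ × ℕ × ℕ → ℝ) {mu : ℝ} (hmu : mu ≠ 0) (lam u a b : ℝ)
    (k : ℕ × ℕ × ℕ) :
    cornerTerm C (lam ^ 2 * u) (lam * mu * a) (lam * b / mu) k - lam ^ 2 * cornerTerm C u a b k
      = C k * 2 ^ k.2.2 * ((lam ^ (k.1 + k.2.1 + k.2.2) / mu ^ k.2.1) ^ 2 - lam ^ 2)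
        * b ^ (2 * k.2.1 + k.2.2) * a ^ k.2.2 * u ^ k.1 := by
  rw [cornerTerm_scale C hmu]
  simp only [cornerTerm]
  ring

theorem sq_eq_of_tsum_cornerTerm_scale {C : ℕ × ℕ × ℕ → ℝ} {lam mu δ : ℝ} (hmu : mu ≠ 0)
    (hδ : 0 < δ)
    (hs : ∀ u ∈ Ioo 0 δ, ∀ a ∈ Ioo 0 δ, ∀ b ∈ Ioo 0 δ, Summable (cornerTerm C u a b) ∧
      Summable (cornerTerm C (lam ^ 2 * u) (lam * mu * a) (lam * b / mu)))
    (heq : ∀ u ∈ Ioo 0 δ, ∀ a ∈ Ioo 0 δ, ∀ b ∈ Ioo 0 δ,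
      ∑' k, cornerTerm C (lam ^ 2 * u) (lam * mu * a) (lam * b / mu) k
        = lam ^ 2 * ∑' k, cornerTerm C u a b k)
    {k : ℕ × ℕ × ℕ} (hk : C k ≠ 0) :
    (lam ^ (k.1 + k.2.1 + k.2.2) / mu ^ k.2.1) ^ 2 = lam ^ 2 := by
  have he : Function.Injective fun k : ℕ × ℕ × ℕ => (k.1, k.2.2, 2 * k.2.1 + k.2.2) := by
    rintro ⟨r, p, q⟩ ⟨r', p', q'⟩ h
    simp only [Prod.mk.injEq] at h ⊢
    omega
  have hc := he.eq_zero_of_tsum_monomial_eq_zero (c := fun k => C k * 2 ^ k.2.2 *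
    ((lam ^ (k.1 + k.2.1 + k.2.2) / mu ^ k.2.1) ^ 2 - lam ^ 2)) hδ
    (fun u hu a ha b hb => ?_) (fun u hu a ha b hb => ?_)
  · simpa [hk, sub_eq_zero] using congrFun hc k
  · obtain ⟨hs₁, hs₂⟩ := hs u hu a ha b hb
    exact (hs₂.sub (hs₁.mul_left (lam ^ 2))).congr (cornerTerm_scale_sub C hmu lam u a b)
  · obtain ⟨hs₁, hs₂⟩ := hs u hu a ha b hb
    rw [← tsum_congr (cornerTerm_scale_sub C hmu lam u a b), hs₂.tsum_sub (hs₁.mul_left _),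
      tsum_mul_left, heq u hu a ha b hb, sub_self]

theorem rpow_natCast_sub_one_eq_of_sq_eq {lam mu : ℝ} (hlam : 0 < lam) (hmu : 0 < mu)
    {N p : ℕ} (h : (lam ^ N / mu ^ p) ^ 2 = lam ^ 2) : lam ^ ((N : ℝ) - 1) = mu ^ p := by
  have hratio : lam ^ N / mu ^ p = lam :=
    (pow_left_inj₀ (by positivity) hlam.le two_ne_zero).mp h
  rw [div_eq_iff (by positivity)] at hratio
  rw [Real.rpow_sub_one hlam.ne', Real.rpow_natCast, hratio, mul_div_cancel_left₀ _ hlam.ne']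

/-- Relation (rellammu): if F(z,u) = Σ' C_{rpq} u^r |zₙ|^{2p} ⟨z,z⟩^q converges
absolutely near the origin and satisfies F(λUz, λ²u) = λ²F(z,u) there, where
U = diag(μ, 1, …, 1, 1/μ) ∈ U(H) and λ, μ > 0, λ ≠ 1, μ ≠ 1, then every
non-zero coefficient C_{rpq} satisfies λ^{r+p+q−1} = μ^p. -/
theorem stmt19 {n m : ℕ} (hm : 1 ≤ m) (hnm : 2 * m ≤ n)
    (lam mu : ℝ) (hlam0 : 0 < lam) (hmu0 : 0 < mu)
    (U : Matrix (Fin n) (Fin n) ℂ)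
    (hU : U = Matrix.diagonal (fun i : Fin n =>
      if i.1 = 0 then (mu : ℂ) else if i.1 = n - 1 then (mu : ℂ)⁻¹ else 1))
    (C : ℕ × ℕ × ℕ → ℝ)
    (F : (Fin n → ℂ) → ℝ → ℝ)
    (hFdef : ∀ (z : Fin n → ℂ) (u : ℝ), F z u =
      ∑' k : ℕ × ℕ × ℕ, C k * u ^ k.1 * ‖z ⟨n - 1, by omega⟩‖ ^ (2 * k.2.1) *
        ((dotProduct z ((Hmat n m).mulVec (star z))).re) ^ k.2.2)
    (V : Set ((Fin n → ℂ) × ℝ)) (hV : V ∈ nhds (0 : (Fin n → ℂ) × ℝ))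
    (hsum : ∀ p ∈ V, Summable (fun k : ℕ × ℕ × ℕ =>
      |C k| * |p.2| ^ k.1 * ‖p.1 ⟨n - 1, by omega⟩‖ ^ (2 * k.2.1) *
        |(dotProduct p.1 ((Hmat n m).mulVec (star p.1))).re| ^ k.2.2))
    (heq : ∀ p ∈ V, F (lam • U.mulVec p.1) (lam ^ 2 * p.2) = lam ^ 2 * F p.1 p.2) :
    ∀ r p q : ℕ, C (r, p, q) ≠ 0 →
      lam ^ (((r + p + q : ℕ) : ℝ) - 1) = mu ^ p := by
  intro r p q hC
  have hn : 2 ≤ n := by omega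
  have hF : ∀ u a b, 0 ≤ b → F (cornerVec n a b) u = ∑' k, cornerTerm C u a b k :=
    fun u a b hb => by
      rw [hFdef, norm_cornerVec_last hn a hb, re_cornerVec_dotProduct_Hmat_mulVec hm hnm]; rfl
  have hS : ∀ u a b, 0 ≤ b → (cornerVec n a b, u) ∈ V → Summable (cornerTerm C u a b) := by
    intro u a b hb hmem
    have habs := hsum _ hmem
    rw [norm_cornerVec_last hn a hb, re_cornerVec_dotProduct_Hmat_mulVec hm hnm] at habs
    refine summable_abs_iff.mp (habs.congr fun k => ?_)
    simp [cornerTerm, abs_mul, abs_pow, abs_of_nonneg hb]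
  have hscale : Continuous fun w : ℝ × ℝ × ℝ =>
      (lam ^ 2 * w.1, lam * mu * w.2.1, lam * w.2.2 / mu) := by fun_prop
  obtain ⟨δ, hδ, hcube⟩ := exists_Ioo_cube_of_eventually ((eventually_cornerVec_mem hV).and
    ((hscale.tendsto' 0 0 (by simp)).eventually (eventually_cornerVec_mem hV)))
  have hb' : ∀ b ∈ Ioo (0 : ℝ) δ, 0 ≤ lam * b / mu := fun b hb => by have := hb.1; positivity
  have hsq := sq_eq_of_tsum_cornerTerm_scale (C := C) hmu0.ne' hδ
    (fun u hu a ha b hb => ⟨hS u a b hb.1.le (hcube u hu a ha b hb).1,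
      hS _ _ _ (hb' b hb) (hcube u hu a ha b hb).2⟩)
    (fun u hu a ha b hb => by
      have h := heq _ (hcube u hu a ha b hb).1
      rwa [hU, smul_mulVec_cornerVec, hF _ _ _ (hb' b hb), hF _ _ _ hb.1.le] at h)
    (k := (r, p, q)) hC
  exact rpow_natCast_sub_one_eq_of_sq_eq hlam0 hmu0 hsq
end
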